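/- arXiv:1511.04069 — 11 statements merged into one kernel-verified Lean document; each statement's English description precedes it below -/
import Mathlib

section
/- Let (M,d) be a metric space and T : M → M a surjective mapping such that inf over n of sup over x in M of d(T^{n+1}x, T^n x) equals 0. Then T is the identity mapping on M. -/
theorem Function.Surjective.iSup_edist_iterate_succ_iterate {M : Type*} [PseudoEMetricSpace M]
    {T : M → M} (hT : Surjective T) (n : ℕ) :
    ⨆ x : M, edist (T^[n + 1] x) (T^[n] x) = ⨆ y : M, edist (T y) y := by
  simp only [iterate_succ_apply']
  exact (hT.iterate n).iSup_comp fun y => edist (T y) y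

theorem eq_id_of_iSup_edist_eq_zero {M : Type*} [EMetricSpace M] {T : M → M}
    (h : ⨆ x : M, edist (T x) x = 0) : T = id := by
  funext x
  exact edist_eq_zero.mp (nonpos_iff_eq_zero.mp (h ▸ le_iSup (fun y => edist (T y) y) x))

/-- A surjective mapping on a metric space with
`inf_n sup_x d(T^{n+1}x, T^n x) = 0` is the identity. -/
theorem stmt0 {M : Type*} [MetricSpace M] (T : M → M)
    (hsurj : Function.Surjective T)
    (h : ⨅ n : ℕ, ⨆ x : M, edist (T^[n + 1] x) (T^[n] x) = 0) :
    T = id := by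
  simp only [hsurj.iSup_edist_iterate_succ_iterate, iInf_const] at h
  exact eq_id_of_iSup_edist_eq_zero h
end

section
/- Let T : M → M be a uniformly asymptotically regular mapping on a metric space M. If there exists a nonempty subset D ⊆ M with T(D) = D, then every point of D is a fixed point of T; in particular, the fixed point set of T is nonempty. -/
open Function Set Filter Topology

/-! A point lying in the range of every iterate `T^[n]` is displaced by `T` no more than
the `n`-th uniform step `⨆ z, edist (T^[n+1] z) (T^[n] z)`, which tends to `0` under uniform
asymptotic regularity. If `T '' D = D`, every point of `D` has a preimage in `D` under every
iterate, hence is fixed. -/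

section UniformAsymptoticRegularity

variable {M : Type*} [EMetricSpace M] {T : M → M}

lemma edist_apply_self_le_iSup_edist_iterate {x : M} {n : ℕ} (hx : x ∈ range T^[n]) :
    edist (T x) x ≤ ⨆ z : M, edist (T^[n + 1] z) (T^[n] z) := by
  obtain ⟨y, rfl⟩ := hx
  rw [← iterate_succ_apply' T n y]
  exact le_iSup (fun z => edist (T^[n + 1] z) (T^[n] z)) y

lemma isFixedPt_of_forall_mem_range_iterate
    (hUAR : Tendsto (fun n : ℕ => ⨆ z : M, edist (T^[n + 1] z) (T^[n] z)) atTop (𝓝 0))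
    {x : M} (hx : ∀ n, x ∈ range T^[n]) : IsFixedPt T x := by
  have hle : edist (T x) x ≤ 0 :=
    ge_of_tendsto' hUAR fun n => edist_apply_self_le_iSup_edist_iterate (hx n)
  exact edist_le_zero.mp hle

end UniformAsymptoticRegularity

/-- If `T` is uniformly asymptotically regular on a metric space `M` and
`T(D) = D` for some nonempty `D ⊆ M`, then `D ⊆ Fix T`; in particular the
fixed point set of `T` is nonempty. -/
theorem stmt3 {M : Type*} [MetricSpace M] (T : M → M)
    (hUAR : Tendsto (fun n : ℕ => ⨆ x : M, edist (T^[n + 1] x) (T^[n] x))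
      atTop (𝓝 0))
    (D : Set M) (hD : D.Nonempty) (hTD : T '' D = D) :
    D ⊆ Function.fixedPoints T ∧ (Function.fixedPoints T).Nonempty := by
  have hsurj : SurjOn T D D := hTD.ge
  have hsub : D ⊆ fixedPoints T := fun x hx =>
    isFixedPt_of_forall_mem_range_iterate hUAR fun n =>
      image_subset_range _ _ (hsurj.iterate n hx)
  exact ⟨hsub, hD.mono hsub⟩
end

section
/- Let C be a bounded subset of a Banach space E and T : C → C a firmly nonexpansive mapping. Then T is uniformly asymptotically regular, i.e., lim_{n→∞} sup_{x∈C} ‖T^{n+1}x − T^n x‖ = 0. -/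
/-!
Put `d k = ‖z k - z (k + 1)‖` for an orbit `z k = T^[k] x`. Firm nonexpansiveness at `α = 1/2`
gives `2 ‖z (k+1) - z (l+1)‖ ≤ ‖z k - z (l+1)‖ + ‖z (k+1) - z l‖`, so `d` is nonincreasing.
On a block of `N` steps over which `d` drops by at most `δ`, the same inequality shows by
induction that the orbit moves almost in a straight line: `‖z k₀ - z (k₀+N)‖ ≥ N d (k₀+N) - O(δ)`.
Since `d` starts below the diameter `D` of `C`, among `M > D / δ` consecutive blocks one has
drop at most `δ`, and after it `N d ≤ D + 1`. All constants depend only on `D` and the target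
precision, which gives uniformity in the starting point.
-/

open Function Set Filter Topology

section FirmSequence

variable {E : Type*} [SeminormedAddCommGroup E]

lemma norm_sub_le_mul_of_norm_sub_succ_le (z : ℕ → E) {a n : ℕ} {c : ℝ}
    (h : ∀ i, a ≤ i → i < a + n → ‖z i - z (i + 1)‖ ≤ c) :
    ‖z a - z (a + n)‖ ≤ n * c := by
  have := dist_le_Ico_sum_of_dist_le (f := z) (d := fun _ => c) (Nat.le_add_right a n)
    fun hk hk' => (dist_eq_norm _ _).trans_le (h _ hk hk')
  simpa [dist_eq_norm] using this

lemma exists_le_add_of_lt_mul {u : ℕ → ℝ} (hu : ∀ j, 0 ≤ u j) {D δ : ℝ} {M : ℕ}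
    (hD : u 0 ≤ D) (hM : D < M * δ) : ∃ j < M, u j ≤ u (j + 1) + δ := by
  by_contra! h
  have hdecay : ∀ j ≤ M, u j + j * δ ≤ u 0 := by
    intro j hj
    induction j with
    | zero => simp
    | succ j ih =>
      have := h j (by omega)
      have := ih (by omega)
      push_cast
      linarith
  linarith [hdecay M le_rfl, hu M]

variable {z : ℕ → E}

lemma two_mul_norm_sub_le_of_firm
    (hz : ∀ k l, 2 * ‖z (k + 1) - z (l + 1)‖ ≤ ‖z k - z l + (z (k + 1) - z (l + 1))‖)
    (k l : ℕ) : 2 * ‖z (k + 1) - z (l + 1)‖ ≤ ‖z k - z (l + 1)‖ + ‖z (k + 1) - z l‖ :=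
  calc 2 * ‖z (k + 1) - z (l + 1)‖ ≤ ‖z k - z l + (z (k + 1) - z (l + 1))‖ := hz k l
    _ = ‖z k - z (l + 1) + (z (k + 1) - z l)‖ := by congr 1; abel
    _ ≤ _ := norm_add_le _ _

lemma antitone_norm_sub_succ
    (hz : ∀ k l, 2 * ‖z (k + 1) - z (l + 1)‖ ≤ ‖z k - z l + (z (k + 1) - z (l + 1))‖) :
    Antitone fun k => ‖z k - z (k + 1)‖ := by
  refine antitone_nat_of_succ_le fun k => ?_
  have h := two_mul_norm_sub_le_of_firm hz k (k + 1)
  have := norm_sub_le_norm_sub_add_norm_sub (z k) (z (k + 1)) (z (k + 1 + 1))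
  rw [sub_self, norm_zero, add_zero] at h
  linarith

lemma sub_le_norm_sub_of_window
    (hz : ∀ k l, 2 * ‖z (k + 1) - z (l + 1)‖ ≤ ‖z k - z l + (z (k + 1) - z (l + 1))‖)
    {k₀ N : ℕ} {ρ δ : ℝ} (hδ : 0 ≤ δ)
    (hlow : ∀ i, i < k₀ + N → ρ ≤ ‖z i - z (i + 1)‖)
    (hup : ∀ i, k₀ ≤ i → ‖z i - z (i + 1)‖ ≤ ρ + δ) (n : ℕ) :
    ∀ k, k₀ ≤ k → k + n ≤ k₀ + N → n * ρ - n * 2 ^ n * δ ≤ ‖z k - z (k + n)‖ := by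
  induction n with
  | zero => intro k _ _; simp
  | succ n ih =>
    intro k hk hkn
    rcases n with _ | n
    · have := hlow k (by omega)
      have : 0 ≤ 2 * δ := by positivity
      simp only [Nat.cast_one, one_mul, zero_add, pow_one]
      linarith
    · have hstep := two_mul_norm_sub_le_of_firm hz k (k + n + 1)
      have hih := ih (k + 1) (by omega) (by omega)
      have hshort := norm_sub_le_mul_of_norm_sub_succ_le z (a := k + 1) (n := n)
        fun i hi _ => hup i (by omega)
      have hpow : (n : ℝ) ≤ 2 ^ (n + 1) := by
        exact_mod_cast (Nat.lt_two_pow_self.trans (Nat.pow_lt_pow_succ one_lt_two)).le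
      rw [show k + 1 + (n + 1) = k + n + 1 + 1 by omega] at hih
      rw [show k + 1 + n = k + n + 1 by omega] at hshort
      rw [show k + (n + 1 + 1) = k + n + 1 + 1 by omega]
      push_cast at hih ⊢
      rw [pow_succ _ (n + 1)]
      linarith [mul_nonneg (sub_nonneg.2 hpow) hδ, mul_nonneg (pow_nonneg zero_le_two (n + 1)) hδ]

lemma mul_norm_sub_succ_le_of_drop_le
    (hz : ∀ k l, 2 * ‖z (k + 1) - z (l + 1)‖ ≤ ‖z k - z l + (z (k + 1) - z (l + 1))‖)
    {k₀ N : ℕ} {δ : ℝ} (hδ : 0 ≤ δ)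
    (hdrop : ‖z k₀ - z (k₀ + 1)‖ ≤ ‖z (k₀ + N) - z (k₀ + N + 1)‖ + δ) :
    N * ‖z (k₀ + N) - z (k₀ + N + 1)‖ ≤ ‖z k₀ - z (k₀ + N)‖ + N * 2 ^ N * δ := by
  have hanti := antitone_norm_sub_succ hz
  have := sub_le_norm_sub_of_window hz hδ (fun i hi => hanti hi.le)
    (fun i hi => (hanti hi).trans hdrop) N k₀ le_rfl le_rfl
  linarith

theorem exists_forall_norm_sub_succ_le (D : ℝ) {ε : ℝ} (hε : 0 < ε) :
    ∃ m₀ : ℕ, ∀ z : ℕ → E,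
      (∀ k l, 2 * ‖z (k + 1) - z (l + 1)‖ ≤ ‖z k - z l + (z (k + 1) - z (l + 1))‖) →
      (∀ k l, ‖z k - z l‖ ≤ D) → ∀ m ≥ m₀, ‖z m - z (m + 1)‖ ≤ ε := by
  obtain ⟨N, hN₀, hN⟩ : ∃ N : ℕ, 0 < N ∧ D + 1 < N * ε := by
    refine ⟨⌈(D + 1) / ε⌉₊ + 1, by omega, ?_⟩
    rw [← div_lt_iff₀ hε]
    push_cast
    linarith [Nat.le_ceil ((D + 1) / ε)]
  set δ : ℝ := (N * 2 ^ N)⁻¹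
  have hδ : 0 < δ := by positivity
  have hNδ : N * 2 ^ N * δ = 1 := mul_inv_cancel₀ (by positivity)
  obtain ⟨M, hM⟩ := exists_nat_gt (D / δ)
  refine ⟨M * N, fun z hz hD m hm => ?_⟩
  obtain ⟨j, hjM, hj⟩ := exists_le_add_of_lt_mul (u := fun j => ‖z (j * N) - z (j * N + 1)‖)
    (fun _ => norm_nonneg _) (by simpa using hD 0 1) ((div_lt_iff₀ hδ).1 hM)
  have hblock := mul_norm_sub_succ_le_of_drop_le hz hδ.le (k₀ := j * N) (N := N)
    (by simpa [add_mul] using hj)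
  have hmono := antitone_norm_sub_succ hz
    (show j * N + N ≤ m by nlinarith [Nat.succ_le_of_lt hjM])
  have : (N : ℝ) * ‖z m - z (m + 1)‖ < N * ε := by
    nlinarith [hD (j * N) (j * N + N), (Nat.cast_pos (α := ℝ)).2 hN₀]
  exact (lt_of_mul_lt_mul_left this (Nat.cast_nonneg N)).le

end FirmSequence

section FirmlyNonexpansive

variable {E : Type*} [SeminormedAddCommGroup E] [NormedSpace ℝ E]

def FirmlyNonexpansiveOn (T : E → E) (C : Set E) : Prop :=
  ∀ x ∈ C, ∀ y ∈ C, ∀ α ∈ Ioo (0 : ℝ) 1, ‖T x - T y‖ ≤ ‖α • (x - y) + (1 - α) • (T x - T y)‖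

lemma FirmlyNonexpansiveOn.two_mul_norm_sub_le {T : E → E} {C : Set E}
    (hT : FirmlyNonexpansiveOn T C) {x y : E} (hx : x ∈ C) (hy : y ∈ C) :
    2 * ‖T x - T y‖ ≤ ‖x - y + (T x - T y)‖ := by
  have h := hT x hx y hy (1 / 2) ⟨by norm_num, by norm_num⟩
  rw [show (1 : ℝ) - 1 / 2 = 1 / 2 by norm_num, ← smul_add, norm_smul] at h
  norm_num at h
  linarith

lemma FirmlyNonexpansiveOn.two_mul_norm_iterate_sub_le {T : E → E} {C : Set E}
    (hT : FirmlyNonexpansiveOn T C) (hTC : MapsTo T C C) {x : E} (hx : x ∈ C) (k l : ℕ) :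
    2 * ‖T^[k + 1] x - T^[l + 1] x‖ ≤ ‖T^[k] x - T^[l] x + (T^[k + 1] x - T^[l + 1] x)‖ := by
  simpa only [iterate_succ_apply'] using
    hT.two_mul_norm_sub_le (hTC.iterate k hx) (hTC.iterate l hx)

end FirmlyNonexpansive

theorem stmt4_general {E : Type*} [NormedAddCommGroup E] [NormedSpace ℝ E]
    (C : Set E) (hC : Bornology.IsBounded C)
    (T : E → E) (hTC : Set.MapsTo T C C)
    (hfne : ∀ x ∈ C, ∀ y ∈ C, ∀ α ∈ Set.Ioo (0 : ℝ) 1,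
      ‖T x - T y‖ ≤ ‖α • (x - y) + (1 - α) • (T x - T y)‖) :
    Tendsto (fun n : ℕ => ⨆ x : C, ‖T^[n + 1] (x : E) - T^[n] (x : E)‖)
      atTop (𝓝 0) := by
  obtain ⟨D, hD⟩ := Metric.isBounded_iff.1 hC
  refine Metric.tendsto_atTop.2 fun ε hε => ?_
  obtain ⟨m₀, hm₀⟩ := exists_forall_norm_sub_succ_le (E := E) D (half_pos hε)
  refine ⟨m₀, fun m hm => ?_⟩
  have hbound (x : C) : ‖T^[m + 1] x - T^[m] x‖ ≤ ε / 2 := by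
    rw [norm_sub_rev]
    refine hm₀ (fun k => T^[k] x) (FirmlyNonexpansiveOn.two_mul_norm_iterate_sub_le hfne hTC x.2)
      (fun k l => ?_) m hm
    rw [← dist_eq_norm]
    exact hD (hTC.iterate k x.2) (hTC.iterate l x.2)
  rw [Real.dist_eq, sub_zero, abs_of_nonneg (Real.iSup_nonneg fun _ => norm_nonneg _)]
  exact (Real.iSup_le hbound (half_pos hε).le).trans_lt (half_lt_self hε)

/-- A firmly nonexpansive self-mapping of a bounded subset of a Banach space
is uniformly asymptotically regular. -/
theorem stmt4 {E : Type*} [NormedAddCommGroup E] [NormedSpace ℝ E]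
    [CompleteSpace E] (C : Set E) (hC : Bornology.IsBounded C)
    (T : E → E) (hTC : Set.MapsTo T C C)
    (hfne : ∀ x ∈ C, ∀ y ∈ C, ∀ α ∈ Set.Ioo (0 : ℝ) 1,
      ‖T x - T y‖ ≤ ‖α • (x - y) + (1 - α) • (T x - T y)‖) :
    Tendsto (fun n : ℕ => ⨆ x : C, ‖T^[n + 1] (x : E) - T^[n] (x : E)‖)
      atTop (𝓝 0) :=
  stmt4_general C hC T hTC hfne
end

section
/- Let C be a bounded subset of a Banach space and T : C → C a firmly nonexpansive mapping. If there exists a nonempty set D ⊆ C with T(D) = D, then D is contained in the fixed point set of T; in particular T has a fixed point. -/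
open Function Set Filter Topology

/-!
Firm nonexpansiveness at `α = 1/2` and the triangle inequality give
`2‖Tp - Tq‖ ≤ ‖p - Tq‖ + ‖Tp - q‖`. Since `T(D) = D`, every `x ∈ D` starts a backward orbit
`x = x₀, x₁, x₂, …` in `D` with `T xₙ₊₁ = xₙ`, and along it the inequality says that the gaps
`c m = supⱼ ‖xⱼ - xⱼ₊ₘ‖` form a convex sequence with `c 0 = 0`. Hence `c m ≥ m · c 1`, and since
`C` is bounded, `c 1 = 0`, i.e. `T x = x`.
-/

lemma two_mul_norm_sub_le_of_le_norm_midpoint {E : Type*} [SeminormedAddCommGroup E]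
    [NormedSpace ℝ E] {p q u v : E}
    (h : ‖u - v‖ ≤ ‖(1 / 2 : ℝ) • (p - q) + (1 - 1 / 2 : ℝ) • (u - v)‖) :
    2 * ‖u - v‖ ≤ ‖p - v‖ + ‖u - q‖ := by
  have hmid : (1 / 2 : ℝ) • (p - q) + (1 - 1 / 2 : ℝ) • (u - v)
      = (1 / 2 : ℝ) • ((p - v) + (u - q)) := by
    rw [show (1 - 1 / 2 : ℝ) = 1 / 2 by norm_num, ← smul_add]
    abel_nf
  rw [hmid, norm_smul, Real.norm_of_nonneg (by norm_num)] at h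
  linarith [norm_add_le (p - v) (u - q)]

lemma exists_backward_orbit {α : Type*} {T : α → α} {D : Set α} (hTD : D ⊆ T '' D)
    {x₀ : α} (hx₀ : x₀ ∈ D) :
    ∃ x : ℕ → α, x 0 = x₀ ∧ (∀ n, x n ∈ D) ∧ ∀ n, T (x (n + 1)) = x n := by
  have hpre : ∀ y ∈ D, ∃ w ∈ D, T w = y := fun y hy => hTD hy
  choose! f hfD hfT using hpre
  have horbit : ∀ n, f^[n] x₀ ∈ D := fun n => by
    induction n with
    | zero => exact hx₀
    | succ n ih => simpa only [iterate_succ_apply'] using hfD _ ih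
  refine ⟨fun n => f^[n] x₀, rfl, horbit, fun n => ?_⟩
  simp only [iterate_succ_apply']
  exact hfT _ (horbit n)

lemma mul_le_of_convex_of_zero {c : ℕ → ℝ} (h0 : c 0 = 0)
    (hconv : ∀ m, 2 * c (m + 1) ≤ c m + c (m + 2)) (m : ℕ) : m * c 1 ≤ c m := by
  have hinc : ∀ m, c 1 ≤ c (m + 1) - c m := by
    intro m
    induction m with
    | zero => simp [h0]
    | succ n ih => linarith [hconv n]
  induction m with
  | zero => simp [h0]
  | succ n ih =>
    push_cast
    linarith [hinc n]

lemma nonpos_one_of_convex_of_bddAbove {c : ℕ → ℝ} (h0 : c 0 = 0)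
    (hconv : ∀ m, 2 * c (m + 1) ≤ c m + c (m + 2)) (hbdd : BddAbove (range c)) : c 1 ≤ 0 := by
  obtain ⟨M, hM⟩ := hbdd
  by_contra! hpos
  obtain ⟨n, hn⟩ := exists_nat_gt (M / c 1)
  rw [div_lt_iff₀ hpos] at hn
  linarith [mul_le_of_convex_of_zero h0 hconv n, hM (mem_range_self n)]

section Gaps

variable {X : Type*} [PseudoMetricSpace X] {x : ℕ → X}

noncomputable def gapSup (x : ℕ → X) (m : ℕ) : ℝ := ⨆ j, dist (x j) (x (j + m))

lemma gapSup_zero (x : ℕ → X) : gapSup x 0 = 0 := by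
  simp [gapSup]

lemma dist_le_gapSup (hx : Bornology.IsBounded (range x)) (m j : ℕ) :
    dist (x j) (x (j + m)) ≤ gapSup x m :=
  le_ciSup (f := fun j => dist (x j) (x (j + m)))
    ⟨Metric.diam (range x), by
      rintro _ ⟨i, rfl⟩
      exact Metric.dist_le_diam_of_mem hx (mem_range_self _) (mem_range_self _)⟩ j

lemma gapSup_le_diam (hx : Bornology.IsBounded (range x)) (m : ℕ) :
    gapSup x m ≤ Metric.diam (range x) :=
  ciSup_le fun _ => Metric.dist_le_diam_of_mem hx (mem_range_self _) (mem_range_self _)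

lemma two_mul_gapSup_succ_le (hx : Bornology.IsBounded (range x))
    (h : ∀ i j, 2 * dist (x i) (x j) ≤ dist (x (i + 1)) (x j) + dist (x i) (x (j + 1)))
    (m : ℕ) : 2 * gapSup x (m + 1) ≤ gapSup x m + gapSup x (m + 2) := by
  suffices ∀ j, dist (x j) (x (j + (m + 1))) ≤ (gapSup x m + gapSup x (m + 2)) / 2 by
    exact le_div_iff₀' two_pos |>.1 (ciSup_le this)
  intro j
  have hnear := dist_le_gapSup hx m (j + 1)
  have hfar := dist_le_gapSup hx (m + 2) j
  rw [show j + 1 + m = j + (m + 1) by omega] at hnear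
  rw [show j + (m + 2) = j + (m + 1) + 1 by omega] at hfar
  linarith [h j (j + (m + 1))]

end Gaps

lemma eq_of_isBounded_range_of_two_mul_dist_le {X : Type*} [MetricSpace X] {x : ℕ → X}
    (hx : Bornology.IsBounded (range x))
    (h : ∀ i j, 2 * dist (x i) (x j) ≤ dist (x (i + 1)) (x j) + dist (x i) (x (j + 1))) :
    x 1 = x 0 := by
  have hgap : gapSup x 1 ≤ 0 :=
    nonpos_one_of_convex_of_bddAbove (gapSup_zero x) (two_mul_gapSup_succ_le hx h)
      ⟨_, forall_mem_range.2 (gapSup_le_diam hx)⟩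
  exact dist_le_zero.1 (by simpa [dist_comm] using (dist_le_gapSup hx 1 0).trans hgap)

theorem stmt5_general {E : Type*} [NormedAddCommGroup E] [NormedSpace ℝ E]
    (C : Set E) (hC : Bornology.IsBounded C)
    (T : E → E)
    (hfne : ∀ x ∈ C, ∀ y ∈ C, ∀ α ∈ Set.Ioo (0 : ℝ) 1,
      ‖T x - T y‖ ≤ ‖α • (x - y) + (1 - α) • (T x - T y)‖)
    (D : Set E) (hDC : D ⊆ C) (hD : D.Nonempty) (hTD : T '' D = D) :
    (∀ x ∈ D, T x = x) ∧ ∃ x ∈ C, T x = x := by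
  have hhalf : ∀ p ∈ C, ∀ q ∈ C, 2 * ‖T p - T q‖ ≤ ‖p - T q‖ + ‖T p - q‖ :=
    fun p hp q hq =>
      two_mul_norm_sub_le_of_le_norm_midpoint (hfne p hp q hq _ ⟨by norm_num, by norm_num⟩)
  have hfix : ∀ x ∈ D, T x = x := by
    intro x₀ hx₀
    obtain ⟨x, rfl, hxD, hxT⟩ := exists_backward_orbit hTD.superset hx₀
    have hxC : ∀ n, x n ∈ C := fun n => hDC (hxD n)
    have h10 : x 1 = x 0 :=
      eq_of_isBounded_range_of_two_mul_dist_le (hC.subset (range_subset_iff.2 hxC))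
        fun i j => by
          simpa only [dist_eq_norm, hxT] using hhalf _ (hxC (i + 1)) _ (hxC (j + 1))
    rw [← h10, hxT, h10]
  obtain ⟨y, hy⟩ := hD
  exact ⟨hfix, y, hDC hy, hfix y hy⟩

/-- If a firmly nonexpansive `T` on a bounded subset `C` of a Banach space
satisfies `T(D) = D` for some nonempty `D ⊆ C`, then `D` consists of fixed
points of `T`; in particular `T` has a fixed point. -/
theorem stmt5 {E : Type*} [NormedAddCommGroup E] [NormedSpace ℝ E]
    [CompleteSpace E] (C : Set E) (hC : Bornology.IsBounded C)
    (T : E → E) (hTC : Set.MapsTo T C C)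
    (hfne : ∀ x ∈ C, ∀ y ∈ C, ∀ α ∈ Set.Ioo (0 : ℝ) 1,
      ‖T x - T y‖ ≤ ‖α • (x - y) + (1 - α) • (T x - T y)‖)
    (D : Set E) (hDC : D ⊆ C) (hD : D.Nonempty) (hTD : T '' D = D) :
    (∀ x ∈ D, T x = x) ∧ ∃ x ∈ C, T x = x :=
  stmt5_general C hC T hfne D hDC hD hTD
end

section
/- Let C be a convex bounded subset of a Banach space, S : C → C nonexpansive, and α ∈ (0,1). Then the averaged mapping T = αI + (1−α)S maps C into C and is uniformly asymptotically regular. -/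
/-!
Along an orbit `xₙ = Tⁿ x` the displacements `‖S xₙ - xₙ‖` decrease. The Goebel–Kirk inequality
`αⁿ (1 + n(1 - α)) ‖S x - x‖ ≤ αⁿ ‖S xₙ - x‖ + (‖S x - x‖ - ‖S xₙ - xₙ‖)`, proved by induction on
`n`, bounds the displacement after `n` steps by `diam C / (1 + n(1 - α))` up to the decrease of the
displacement over these `n` steps. Over `K` consecutive blocks of `n` steps the total decrease is at
most `diam C`, so once `K αⁿ ≥ 1` the displacement after `K n` steps is at most
`2 diam C / (1 + n(1 - α))`, uniformly in `x ∈ C`.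
-/

open Function Set Filter Topology

noncomputable def averagedMap {E : Type*} [AddCommGroup E] [Module ℝ E] (α : ℝ) (S : E → E) :
    E → E :=
  fun x => α • x + (1 - α) • S x

section AveragedMap

variable {E : Type*} [NormedAddCommGroup E] [NormedSpace ℝ E] {C : Set E} {S : E → E} {α : ℝ}

theorem averagedMap_sub_self (α : ℝ) (S : E → E) (x : E) :
    averagedMap α S x - x = (1 - α) • (S x - x) := by
  simp only [averagedMap, smul_sub]
  module

theorem norm_averagedMap_sub_self (hα : α ≤ 1) (x : E) :
    ‖averagedMap α S x - x‖ = (1 - α) * ‖S x - x‖ := by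
  rw [averagedMap_sub_self, norm_smul, Real.norm_of_nonneg (sub_nonneg.2 hα)]

theorem mapsTo_averagedMap (hC : Convex ℝ C) (hS : MapsTo S C C) (hα : α ∈ Icc 0 1) :
    MapsTo (averagedMap α S) C C := fun _ hx =>
  hC hx (hS hx) hα.1 (sub_nonneg.2 hα.2) (add_sub_cancel α 1)

theorem norm_sub_averagedMap_le (hS : LipschitzOnWith 1 S C) (hα : α ∈ Icc 0 1) {x : E}
    (hx : x ∈ C) (hTx : averagedMap α S x ∈ C) :
    ‖S (averagedMap α S x) - averagedMap α S x‖ ≤ ‖S x - x‖ := by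
  have hSx : S x - averagedMap α S x = α • (S x - x) := by
    simp only [averagedMap, smul_sub]
    module
  calc ‖S (averagedMap α S x) - averagedMap α S x‖
      ≤ ‖S (averagedMap α S x) - S x‖ + ‖S x - averagedMap α S x‖ :=
        norm_sub_le_norm_sub_add_norm_sub _ _ _
    _ ≤ ‖averagedMap α S x - x‖ + α * ‖S x - x‖ := by
        rw [hSx, norm_smul, Real.norm_of_nonneg hα.1]
        gcongr
        simpa only [NNReal.coe_one, one_mul] using hS.norm_sub_le hTx hx
    _ = ‖S x - x‖ := by
        rw [norm_averagedMap_sub_self hα.2]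
        ring

theorem antitone_norm_sub_iterate_averagedMap (hS : LipschitzOnWith 1 S C)
    (hT : MapsTo (averagedMap α S) C C) (hα : α ∈ Icc 0 1) {x : E} (hx : x ∈ C) :
    Antitone fun n => ‖S ((averagedMap α S)^[n] x) - (averagedMap α S)^[n] x‖ :=
  antitone_nat_of_succ_le fun n => by
    rw [iterate_succ_apply']
    exact norm_sub_averagedMap_le hS hα (hT.iterate n hx) (hT (hT.iterate n hx))

theorem norm_iterate_averagedMap_sub_le (hS : LipschitzOnWith 1 S C)
    (hT : MapsTo (averagedMap α S) C C) (hα : α ∈ Icc 0 1) {x : E} (hx : x ∈ C) (n : ℕ) :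
    ‖(averagedMap α S)^[n] x - x‖ ≤ n * ((1 - α) * ‖S x - x‖) := by
  induction n with
  | zero => simp
  | succ n ih =>
    have hα' : 0 ≤ 1 - α := sub_nonneg.2 hα.2
    calc ‖(averagedMap α S)^[n + 1] x - x‖
        ≤ ‖averagedMap α S ((averagedMap α S)^[n] x) - (averagedMap α S)^[n] x‖
          + ‖(averagedMap α S)^[n] x - x‖ := by
          rw [iterate_succ_apply']
          exact norm_sub_le_norm_sub_add_norm_sub _ _ _
      _ ≤ (1 - α) * ‖S x - x‖ + n * ((1 - α) * ‖S x - x‖) := by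
          rw [norm_averagedMap_sub_self hα.2]
          gcongr
          exact antitone_norm_sub_iterate_averagedMap hS hT hα hx (Nat.zero_le n)
      _ = (n + 1 : ℕ) * ((1 - α) * ‖S x - x‖) := by
          push_cast
          ring

theorem pow_mul_one_add_mul_sub_le_one (h₀ : 0 ≤ α) (h₁ : α ≤ 1) (n : ℕ) :
    α ^ n * (1 + n * (1 - α)) ≤ 1 :=
  calc α ^ n * (1 + n * (1 - α))
      ≤ α ^ n * (1 + (1 - α)) ^ n := by
        gcongr
        exact one_add_mul_le_pow (by linarith) n
    _ = (1 - (1 - α) ^ 2) ^ n := by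
        rw [← mul_pow]
        ring
    _ ≤ 1 := pow_le_one₀ (by nlinarith) (by nlinarith)

theorem goebel_kirk_inequality (hS : LipschitzOnWith 1 S C)
    (hT : MapsTo (averagedMap α S) C C) (hα : α ∈ Icc 0 1) {x : E} (hx : x ∈ C) (n : ℕ) :
    α ^ n * (1 + n * (1 - α)) * ‖S x - x‖
      ≤ α ^ n * ‖S ((averagedMap α S)^[n] x) - x‖
        + (‖S x - x‖ - ‖S ((averagedMap α S)^[n] x) - (averagedMap α S)^[n] x‖) := by
  induction n generalizing x with
  | zero => simp
  | succ n ih =>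
    have ih := ih (hT hx)
    rw [← iterate_succ_apply, Nat.succ_eq_add_one] at ih
    set T := averagedMap α S
    set y := S (T^[n + 1] x)
    have hsplit : ‖y - T x‖ ≤ α * ‖y - x‖ + (1 - α) * ‖y - S x‖ := by
      have : y - T x = α • (y - x) + (1 - α) • (y - S x) := by
        simp only [T, averagedMap, smul_sub]
        module
      rw [this]
      refine (norm_add_le _ _).trans_eq ?_
      rw [norm_smul, norm_smul, Real.norm_of_nonneg hα.1, Real.norm_of_nonneg (sub_nonneg.2 hα.2)]
    have hyS : ‖y - S x‖ ≤ (n + 1 : ℕ) * ((1 - α) * ‖S x - x‖) := by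
      grw [← norm_iterate_averagedMap_sub_le hS hT hα hx (n + 1)]
      simpa only [NNReal.coe_one, one_mul] using hS.norm_sub_le (hT.iterate (n + 1) hx) hx
    have hmono : ‖S (T x) - T x‖ ≤ ‖S x - x‖ := norm_sub_averagedMap_le hS hα hx (hT hx)
    have hp := pow_mul_one_add_mul_sub_le_one hα.1 hα.2 n
    have hαn : 0 ≤ α ^ n := pow_nonneg hα.1 n
    push_cast at hyS ⊢
    rw [pow_succ]
    -- `α (1 + (n + 1)(1 - α)) = (1 + n(1 - α)) - (n + 1)(1 - α)²` makes this linear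
    linarith [mul_le_mul_of_nonneg_left hsplit hαn,
      mul_le_mul_of_nonneg_left hyS (mul_nonneg hαn (sub_nonneg.2 hα.2)),
      mul_nonneg (sub_nonneg.2 hp) (sub_nonneg.2 hmono)]

theorem pow_mul_norm_sub_iterate_averagedMap_le (hS : LipschitzOnWith 1 S C) (hSC : MapsTo S C C)
    (hT : MapsTo (averagedMap α S) C C) (hα : α ∈ Icc 0 1) (hC : Bornology.IsBounded C)
    {x : E} (hx : x ∈ C) (n : ℕ) :
    α ^ n * (1 + n * (1 - α)) * ‖S ((averagedMap α S)^[n] x) - (averagedMap α S)^[n] x‖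
      ≤ α ^ n * Metric.diam C
        + (‖S x - x‖ - ‖S ((averagedMap α S)^[n] x) - (averagedMap α S)^[n] x‖) := by
  have hn := hT.iterate n hx
  have hdiam : ‖S ((averagedMap α S)^[n] x) - x‖ ≤ Metric.diam C := by
    rw [← dist_eq_norm]
    exact Metric.dist_le_diam_of_mem hC (hSC hn) hx
  have hanti : ‖S ((averagedMap α S)^[n] x) - (averagedMap α S)^[n] x‖ ≤ ‖S x - x‖ :=
    antitone_norm_sub_iterate_averagedMap hS hT hα hx (Nat.zero_le n)
  have hcoef : 0 ≤ α ^ n * (1 + n * (1 - α)) := by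
    have := sub_nonneg.2 hα.2
    have := hα.1
    positivity
  linarith [goebel_kirk_inequality hS hT hα hx n, mul_le_mul_of_nonneg_left hanti hcoef,
    mul_le_mul_of_nonneg_left hdiam (pow_nonneg hα.1 n)]

theorem nat_mul_le_of_antitone_of_mul_succ_le {b : ℕ → ℝ} (hb : Antitone b) {c e : ℝ}
    (hc : 0 ≤ c) (h : ∀ j, c * b (j + 1) ≤ e + (b j - b (j + 1))) (K : ℕ) :
    K * c * b K ≤ K * e + (b 0 - b K) := by
  induction K with
  | zero => simp
  | succ K ih =>
    have := mul_le_mul_of_nonneg_left (hb K.le_succ) (mul_nonneg K.cast_nonneg hc)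
    push_cast
    linarith [h K]

theorem nat_mul_pow_mul_norm_sub_iterate_averagedMap_le (hS : LipschitzOnWith 1 S C)
    (hSC : MapsTo S C C) (hT : MapsTo (averagedMap α S) C C) (hα : α ∈ Icc 0 1)
    (hC : Bornology.IsBounded C) {x : E} (hx : x ∈ C) (n K : ℕ) :
    K * (α ^ n * (1 + n * (1 - α)))
        * ‖S ((averagedMap α S)^[K * n] x) - (averagedMap α S)^[K * n] x‖
      ≤ K * (α ^ n * Metric.diam C) + Metric.diam C := by
  have hstep (j : ℕ) := pow_mul_norm_sub_iterate_averagedMap_le hS hSC hT hα hC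
    (hT.iterate (j * n) hx) n
  have hblocks := nat_mul_le_of_antitone_of_mul_succ_le
    (b := fun j => ‖S ((averagedMap α S)^[j * n] x) - (averagedMap α S)^[j * n] x‖)
    (c := α ^ n * (1 + n * (1 - α))) (e := α ^ n * Metric.diam C)
    ((antitone_norm_sub_iterate_averagedMap hS hT hα hx).comp_monotone
      fun _ _ h => Nat.mul_le_mul_right n h)
    (by have := sub_nonneg.2 hα.2; have := hα.1; positivity)
    (fun j => by simpa only [← iterate_add_apply, add_mul, one_mul, add_comm] using hstep j) K
  have hdiam : ‖S x - x‖ ≤ Metric.diam C := by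
    rw [← dist_eq_norm]
    exact Metric.dist_le_diam_of_mem hC (hSC hx) hx
  simp only [zero_mul, iterate_zero, id_eq] at hblocks
  linarith [norm_nonneg (S ((averagedMap α S)^[K * n] x) - (averagedMap α S)^[K * n] x)]

theorem eventually_forall_norm_sub_iterate_averagedMap_le (hS : LipschitzOnWith 1 S C)
    (hSC : MapsTo S C C) (hT : MapsTo (averagedMap α S) C C) (hα : α ∈ Ioo 0 1)
    (hC : Bornology.IsBounded C) {ε : ℝ} (hε : 0 < ε) :
    ∀ᶠ m in atTop, ∀ x ∈ C,
      ‖S ((averagedMap α S)^[m] x) - (averagedMap α S)^[m] x‖ ≤ ε := by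
  set d := Metric.diam C
  have hα' : 0 < 1 - α := sub_pos.2 hα.2
  obtain ⟨n, hn⟩ := exists_nat_ge (2 * d / ((1 - α) * ε))
  obtain ⟨K, hK⟩ := exists_nat_ge (α ^ n)⁻¹
  have hq : 1 ≤ K * α ^ n := by
    rwa [← inv_le_iff_one_le_mul₀ (pow_pos hα.1 n)]
  have hP : 2 * d ≤ (1 + n * (1 - α)) * ε := by
    rw [div_le_iff₀ (by positivity)] at hn
    nlinarith
  filter_upwards [eventually_ge_atTop (K * n)] with m hm x hx
  have hblock := nat_mul_pow_mul_norm_sub_iterate_averagedMap_le hS hSC hT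
    (Ioo_subset_Icc_self hα) hC hx n K
  have hanti : ‖S ((averagedMap α S)^[m] x) - (averagedMap α S)^[m] x‖
      ≤ ‖S ((averagedMap α S)^[K * n] x) - (averagedMap α S)^[K * n] x‖ :=
    antitone_norm_sub_iterate_averagedMap hS hT (Ioo_subset_Icc_self hα) hx hm
  refine hanti.trans ?_
  have hd : 0 ≤ d := Metric.diam_nonneg
  have hα1 := hα.1
  refine le_of_mul_le_mul_left (a := K * α ^ n * (1 + n * (1 - α))) ?_
    (mul_pos (one_pos.trans_le hq) (by positivity))
  calc _ ≤ K * (α ^ n * d) + d := by linarith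
    _ ≤ K * α ^ n * (2 * d) := by nlinarith
    _ ≤ K * α ^ n * ((1 + n * (1 - α)) * ε) := by gcongr
    _ = _ := by ring

theorem tendsto_iSup_norm_sub_iterate_averagedMap (hS : LipschitzOnWith 1 S C)
    (hSC : MapsTo S C C) (hT : MapsTo (averagedMap α S) C C) (hα : α ∈ Ioo 0 1)
    (hC : Bornology.IsBounded C) :
    Tendsto (fun m => ⨆ x : C, ‖S ((averagedMap α S)^[m] x) - (averagedMap α S)^[m] x‖)
      atTop (𝓝 0) := by
  refine tendsto_order.2 ⟨fun a ha => .of_forall fun m =>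
    ha.trans_le (Real.iSup_nonneg fun _ => norm_nonneg _), fun ε hε => ?_⟩
  filter_upwards [eventually_forall_norm_sub_iterate_averagedMap_le hS hSC hT hα hC
    (half_pos hε)] with m hm
  exact (Real.iSup_le (fun x : C => hm x x.2) (half_pos hε).le).trans_lt (half_lt_self hε)

end AveragedMap

theorem stmt6_general {E : Type*} [NormedAddCommGroup E] [NormedSpace ℝ E]
    (C : Set E) (hconv : Convex ℝ C)
    (hbd : Bornology.IsBounded C)
    (S : E → E) (hSC : Set.MapsTo S C C)
    (hne : ∀ x ∈ C, ∀ y ∈ C, ‖S x - S y‖ ≤ ‖x - y‖)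
    (α : ℝ) (hα : α ∈ Set.Ioo (0 : ℝ) 1) :
    Set.MapsTo (fun x => α • x + (1 - α) • S x) C C ∧
    Tendsto (fun n : ℕ => ⨆ x : C,
      ‖(fun x => α • x + (1 - α) • S x)^[n + 1] (x : E) -
        (fun x => α • x + (1 - α) • S x)^[n] (x : E)‖)
      atTop (𝓝 0) := by
  have hS : LipschitzOnWith 1 S C :=
    lipschitzOnWith_iff_norm_sub_le.2 fun x hx y hy => by simpa using hne x hx y hy
  have hT := mapsTo_averagedMap hconv hSC (Ioo_subset_Icc_self hα)
  refine ⟨hT, ?_⟩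
  change Tendsto (fun n : ℕ => ⨆ x : C,
    ‖(averagedMap α S)^[n + 1] x - (averagedMap α S)^[n] x‖) atTop (𝓝 0)
  simp_rw [iterate_succ_apply', norm_averagedMap_sub_self hα.2.le,
    ← Real.mul_iSup_of_nonneg (sub_nonneg.2 hα.2.le)]
  simpa using (tendsto_iSup_norm_sub_iterate_averagedMap hS hSC hT hα hbd).const_mul (1 - α)

/-- Ishikawa–Edelstein–O'Brien: the averaged map `T = αI + (1-α)S` of a
nonexpansive mapping on a convex bounded subset of a Banach space maps `C`
into `C` and is uniformly asymptotically regular. -/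
theorem stmt6 {E : Type*} [NormedAddCommGroup E] [NormedSpace ℝ E]
    [CompleteSpace E] (C : Set E) (hconv : Convex ℝ C)
    (hbd : Bornology.IsBounded C)
    (S : E → E) (hSC : Set.MapsTo S C C)
    (hne : ∀ x ∈ C, ∀ y ∈ C, ‖S x - S y‖ ≤ ‖x - y‖)
    (α : ℝ) (hα : α ∈ Set.Ioo (0 : ℝ) 1) :
    Set.MapsTo (fun x => α • x + (1 - α) • S x) C C ∧
    Tendsto (fun n : ℕ => ⨆ x : C,
      ‖(fun x => α • x + (1 - α) • S x)^[n + 1] (x : E) -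
        (fun x => α • x + (1 - α) • S x)^[n] (x : E)‖)
      atTop (𝓝 0) :=
  stmt6_general C hconv hbd S hSC hne α hα
end

section
/- Let C be a convex subset of a Banach space, α ∈ (0,1), S : C → C nonexpansive, and T = αI + (1−α)S the averaged mapping. If there exists a nonempty bounded set D ⊆ C with T(D) = D, then D ⊆ Fix T = Fix S; in particular S has a fixed point. -/
open Function Set

/-!
Along the Krasnoselskii iteration `xₖ₊₁ = α xₖ + (1 - α) S xₖ` the displacement
`dₖ = ‖S xₖ - xₖ‖` is nonincreasing, and the Goebel–Kirk inequality
`(1 + m (1 - α)) dₙ ≤ ‖S xₙ₊ₘ - xₙ‖ + α⁻ᵐ (dₙ - dₙ₊ₘ)` holds. Since `T(D) = D`, every `w ∈ D` is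
the endpoint `xₘ` of an orbit of length `m` inside `D`; with `c = sup_D d` and `R = diam D` this
gives `d(w) ≤ c + αᵐ (R - (1 - α) m c)`. Taking the supremum over `w`, `(1 - α) m c ≤ R` for
every `m`, hence `c = 0`.
-/

theorem pow_mul_one_add_one_sub_mul_le_one {α : ℝ} (hα : 0 ≤ α) (m : ℕ) :
    α ^ m * (1 + (1 - α) * m) ≤ 1 := by
  induction m with
  | zero => simp
  | succ m ih =>
    push_cast
    have : 0 ≤ α ^ m * (1 - α) ^ 2 * (m + 1) := by positivity
    linear_combination ih + this

theorem nonpos_of_forall_nat_mul_le {a R : ℝ} (h : ∀ m : ℕ, m * a ≤ R) : a ≤ 0 := by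
  by_contra! ha
  obtain ⟨m, hm⟩ := exists_nat_gt (R / a)
  linarith [h m, (div_lt_iff₀ ha).mp hm]

namespace Krasnoselskii

variable {E : Type*} [NormedAddCommGroup E] [NormedSpace ℝ E] {S : E → E} {α : ℝ} {x : ℕ → E}

theorem succ_sub (hx : ∀ k, x (k + 1) = α • x k + (1 - α) • S (x k)) (k : ℕ) :
    x (k + 1) - x k = (1 - α) • (S (x k) - x k) := by
  rw [hx]; module

theorem norm_succ_sub (hα1 : α ≤ 1) (hx : ∀ k, x (k + 1) = α • x k + (1 - α) • S (x k))
    (k : ℕ) : ‖x (k + 1) - x k‖ = (1 - α) * ‖S (x k) - x k‖ := by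
  rw [succ_sub hx, norm_smul, Real.norm_of_nonneg (sub_nonneg.2 hα1)]

theorem antitone_norm_displacement (hα0 : 0 ≤ α) (hα1 : α ≤ 1)
    (hx : ∀ k, x (k + 1) = α • x k + (1 - α) • S (x k))
    (hS : ∀ i j, ‖S (x i) - S (x j)‖ ≤ ‖x i - x j‖) :
    Antitone fun k ↦ ‖S (x k) - x k‖ := by
  refine antitone_nat_of_succ_le fun k ↦ ?_
  have hsplit : S (x (k + 1)) - x (k + 1) = (S (x (k + 1)) - S (x k)) + α • (S (x k) - x k) := by
    rw [hx]; module
  calc ‖S (x (k + 1)) - x (k + 1)‖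
      ≤ ‖x (k + 1) - x k‖ + α * ‖S (x k) - x k‖ := by
        rw [hsplit]
        refine (norm_add_le _ _).trans ?_
        rw [norm_smul, Real.norm_of_nonneg hα0]
        gcongr
        exact hS _ _
    _ = ‖S (x k) - x k‖ := by rw [norm_succ_sub hα1 hx]; ring

theorem norm_add_sub_le (hα0 : 0 ≤ α) (hα1 : α ≤ 1)
    (hx : ∀ k, x (k + 1) = α • x k + (1 - α) • S (x k))
    (hS : ∀ i j, ‖S (x i) - S (x j)‖ ≤ ‖x i - x j‖) (n m : ℕ) :
    ‖x (n + m) - x n‖ ≤ (1 - α) * m * ‖S (x n) - x n‖ := by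
  induction m with
  | zero => simp
  | succ m ih =>
    have hstep : ‖x (n + m + 1) - x (n + m)‖ ≤ (1 - α) * ‖S (x n) - x n‖ := by
      rw [norm_succ_sub hα1 hx]
      gcongr
      exact antitone_norm_displacement hα0 hα1 hx hS (Nat.le_add_right n m)
    calc ‖x (n + (m + 1)) - x n‖ ≤ ‖x (n + m + 1) - x (n + m)‖ + ‖x (n + m) - x n‖ :=
          norm_sub_le_norm_sub_add_norm_sub _ _ _
      _ ≤ (1 - α) * ↑(m + 1) * ‖S (x n) - x n‖ := by push_cast; linarith

theorem norm_sub_succ_le (hα0 : 0 ≤ α) (hα1 : α ≤ 1)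
    (hx : ∀ k, x (k + 1) = α • x k + (1 - α) • S (x k))
    (hS : ∀ i j, ‖S (x i) - S (x j)‖ ≤ ‖x i - x j‖) (j k : ℕ) :
    ‖S (x j) - x (k + 1)‖ ≤ α * ‖S (x j) - x k‖ + (1 - α) * ‖x j - x k‖ := by
  have hsplit : S (x j) - x (k + 1) = α • (S (x j) - x k) + (1 - α) • (S (x j) - S (x k)) := by
    rw [hx]; module
  rw [hsplit]
  refine (norm_add_le _ _).trans ?_
  rw [norm_smul, norm_smul, Real.norm_of_nonneg hα0, Real.norm_of_nonneg (sub_nonneg.2 hα1)]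
  gcongr
  exact hS _ _

-- The Goebel–Kirk inequality, multiplied by `α ^ m`.
theorem norm_displacement_add_le (hα0 : 0 ≤ α) (hα1 : α ≤ 1)
    (hx : ∀ k, x (k + 1) = α • x k + (1 - α) • S (x k))
    (hS : ∀ i j, ‖S (x i) - S (x j)‖ ≤ ‖x i - x j‖) (m n : ℕ) :
    ‖S (x (n + m)) - x (n + m)‖ + (α ^ m * (1 + (1 - α) * m) - 1) * ‖S (x n) - x n‖
      ≤ α ^ m * ‖S (x (n + m)) - x n‖ := by
  induction m generalizing n with
  | zero => simp
  | succ m ih =>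
    have hih := ih (n + 1)
    rw [show n + 1 + m = n + (m + 1) by omega] at hih
    have hmono : ‖S (x (n + 1)) - x (n + 1)‖ ≤ ‖S (x n) - x n‖ :=
      antitone_norm_displacement hα0 hα1 hx hS (Nat.le_succ n)
    have hcoef := pow_mul_one_add_one_sub_mul_le_one hα0 m
    have hdist := norm_add_sub_le hα0 hα1 hx hS n (m + 1)
    have hsucc := norm_sub_succ_le hα0 hα1 hx hS (n + (m + 1)) n
    have h1 : (α ^ m * (1 + (1 - α) * m) - 1) * ‖S (x n) - x n‖ ≤
        (α ^ m * (1 + (1 - α) * m) - 1) * ‖S (x (n + 1)) - x (n + 1)‖ :=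
      mul_le_mul_of_nonpos_left hmono (by linarith)
    have h2 : α ^ m * ((1 - α) * ‖x (n + (m + 1)) - x n‖) ≤
        α ^ m * ((1 - α) * ((1 - α) * ↑(m + 1) * ‖S (x n) - x n‖)) := by
      gcongr
    have h3 := mul_le_mul_of_nonneg_left hsucc (pow_nonneg hα0 m)
    push_cast at h2 ⊢
    linear_combination hih + h1 + h2 + h3

end Krasnoselskii

section AveragedMap

variable {E : Type*} [NormedAddCommGroup E] [NormedSpace ℝ E] {S T : E → E} {α : ℝ} {D : Set E}

theorem averaged_eq_self_iff (hα : α ≠ 1) (y : E) : α • y + (1 - α) • S y = y ↔ S y = y := by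
  rw [← sub_eq_zero, show α • y + (1 - α) • S y - y = (1 - α) • (S y - y) by module,
    smul_eq_zero, sub_eq_zero, sub_eq_zero]
  exact or_iff_right (Ne.symm hα)

theorem norm_displacement_le_of_image_eq (hα0 : 0 ≤ α) (hα1 : α ≤ 1)
    (hT : ∀ y, T y = α • y + (1 - α) • S y) (hS : ∀ u ∈ D, ∀ v ∈ D, ‖S u - S v‖ ≤ ‖u - v‖)
    (hTD : T '' D = D) {R c : ℝ} (hR : ∀ u ∈ D, ∀ v ∈ D, ‖u - v‖ ≤ R)
    (hc : ∀ w ∈ D, ‖S w - w‖ ≤ c) (m : ℕ) {w : E} (hw : w ∈ D) :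
    ‖S w - w‖ ≤ c + α ^ m * (R - (1 - α) * m * c) := by
  obtain ⟨hsurj, hmaps⟩ := image_eq_iff_surjOn_mapsTo.mp hTD
  obtain ⟨z, hz, rfl⟩ := hsurj.iterate m hw
  have hxD : ∀ k, T^[k] z ∈ D := fun k ↦ hmaps.iterate k hz
  have hx : ∀ k, T^[k + 1] z = α • T^[k] z + (1 - α) • S (T^[k] z) := fun k ↦ by
    rw [iterate_succ_apply', hT]
  have hGK := Krasnoselskii.norm_displacement_add_le hα0 hα1 hx
    (fun i j ↦ hS _ (hxD i) _ (hxD j)) m 0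
  simp only [zero_add, iterate_zero, id_eq] at hGK
  have hcoef : (α ^ m * (1 + (1 - α) * m) - 1) * c ≤
      (α ^ m * (1 + (1 - α) * m) - 1) * ‖S z - z‖ :=
    mul_le_mul_of_nonpos_left (hc z hz) (by linarith [pow_mul_one_add_one_sub_mul_le_one hα0 m])
  have hfar : ‖S (T^[m] z) - z‖ ≤ c + R :=
    (norm_sub_le_norm_sub_add_norm_sub _ (T^[m] z) _).trans
      (add_le_add (hc _ (hxD m)) (hR _ (hxD m) _ hz))
  have := mul_le_mul_of_nonneg_left hfar (pow_nonneg hα0 m)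
  linear_combination hGK + hcoef + this

theorem apply_eq_self_of_image_eq (hα0 : 0 < α) (hα1 : α < 1)
    (hT : ∀ y, T y = α • y + (1 - α) • S y) (hS : ∀ u ∈ D, ∀ v ∈ D, ‖S u - S v‖ ≤ ‖u - v‖)
    (hDbd : Bornology.IsBounded D) (hTD : T '' D = D) {w : E} (hw : w ∈ D) : S w = w := by
  obtain ⟨R, hR⟩ := Metric.isBounded_iff.mp hDbd
  replace hR : ∀ u ∈ D, ∀ v ∈ D, ‖u - v‖ ≤ R := fun u hu v hv ↦ dist_eq_norm u v ▸ hR hu hv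
  have hbdd : BddAbove ((fun y ↦ ‖S y - y‖) '' D) := by
    refine ⟨R + ‖S w - w‖ + R, ?_⟩
    rintro _ ⟨y, hy, rfl⟩
    calc ‖S y - y‖ ≤ ‖S y - S w‖ + ‖S w - w‖ + ‖w - y‖ := by
          rw [show S y - y = (S y - S w) + (S w - w) + (w - y) by abel]; exact norm_add₃_le
      _ ≤ R + ‖S w - w‖ + R := by gcongr <;> grind
  set c := sSup ((fun y ↦ ‖S y - y‖) '' D)
  have hc : ∀ y ∈ D, ‖S y - y‖ ≤ c := fun y hy ↦ le_csSup hbdd ⟨y, hy, rfl⟩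
  have hcR : ∀ m : ℕ, m * ((1 - α) * c) ≤ R := fun m ↦ by
    have hcm : c ≤ c + α ^ m * (R - (1 - α) * m * c) := csSup_le ⟨_, w, hw, rfl⟩ <| by
      rintro _ ⟨y, hy, rfl⟩
      exact norm_displacement_le_of_image_eq hα0.le hα1.le hT hS hTD hR hc m hy
    nlinarith [pow_pos hα0 m]
  have hc0 : c ≤ 0 :=
    nonpos_of_mul_nonpos_right (nonpos_of_forall_nat_mul_le hcR) (sub_pos.2 hα1)
  exact sub_eq_zero.mp (norm_le_zero_iff.mp ((hc w hw).trans hc0))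

end AveragedMap

theorem stmt7_general {E : Type*} [NormedAddCommGroup E] [NormedSpace ℝ E]
    (C : Set E) (S : E → E)
    (hne : ∀ x ∈ C, ∀ y ∈ C, ‖S x - S y‖ ≤ ‖x - y‖)
    (α : ℝ) (hα : α ∈ Set.Ioo (0 : ℝ) 1)
    (T : E → E) (hT : ∀ x, T x = α • x + (1 - α) • S x)
    (D : Set E) (hDC : D ⊆ C) (hD : D.Nonempty)
    (hDbd : Bornology.IsBounded D) (hTD : T '' D = D) :
    D ⊆ {x ∈ C | T x = x} ∧ {x ∈ C | T x = x} = {x ∈ C | S x = x} ∧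
    ∃ x ∈ C, S x = x := by
  have hfix : ∀ y, T y = y ↔ S y = y := fun y ↦ hT y ▸ averaged_eq_self_iff hα.2.ne y
  have hDfix : ∀ w ∈ D, S w = w := fun w hw ↦
    apply_eq_self_of_image_eq hα.1 hα.2 hT (fun u hu v hv ↦ hne u (hDC hu) v (hDC hv)) hDbd hTD hw
  obtain ⟨w, hw⟩ := hD
  exact ⟨fun y hy ↦ ⟨hDC hy, (hfix y).2 (hDfix y hy)⟩,
    Set.ext fun y ↦ and_congr_right' (hfix y), w, hDC hw, hDfix w hw⟩

/-- For the averaged map `T = αI + (1-α)S` of a nonexpansive `S` on a convex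
subset of a Banach space: if `T(D) = D` for a nonempty bounded `D ⊆ C`, then
`D ⊆ Fix T = Fix S`, and `S` has a fixed point. -/
theorem stmt7 {E : Type*} [NormedAddCommGroup E] [NormedSpace ℝ E]
    [CompleteSpace E] (C : Set E) (hconv : Convex ℝ C)
    (S : E → E) (hSC : Set.MapsTo S C C)
    (hne : ∀ x ∈ C, ∀ y ∈ C, ‖S x - S y‖ ≤ ‖x - y‖)
    (α : ℝ) (hα : α ∈ Set.Ioo (0 : ℝ) 1)
    (T : E → E) (hT : ∀ x, T x = α • x + (1 - α) • S x)
    (D : Set E) (hDC : D ⊆ C) (hD : D.Nonempty)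
    (hDbd : Bornology.IsBounded D) (hTD : T '' D = D) :
    D ⊆ {x ∈ C | T x = x} ∧ {x ∈ C | T x = x} = {x ∈ C | S x = x} ∧
    ∃ x ∈ C, S x = x :=
  stmt7_general C S hne α hα T hT D hDC hD hDbd hTD
end

section
/- Every commuting semigroup of continuous self-maps of a nonempty compact Hausdorff space C is subsurjective: there exists a nonempty subset D ⊆ C such that T(D) = D for every T in the semigroup. -/
open Function Set Filter Topology

/-!
Among the nonempty closed subsets of `C` mapped into themselves by every member of `S`, Zorn's
lemma gives a minimal one `D`: the intersection of a chain is nonempty by compactness. For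
`T ∈ S` the image `T '' D` is again such a set, because commutation gives
`P '' (T '' D) = T '' (P '' D) ⊆ T '' D`, so minimality forces `T '' D = D`.
-/

section

variable {X : Type*} [TopologicalSpace X]

def nonemptyClosedInvariantSets (S : Set (X → X)) : Set (Set X) :=
  {K | K.Nonempty ∧ IsClosed K ∧ ∀ T ∈ S, MapsTo T K K}

theorem sInter_mem_nonemptyClosedInvariantSets [CompactSpace X] {S : Set (X → X)}
    {c : Set (Set X)} (hc : c ⊆ nonemptyClosedInvariantSets S) (hchain : IsChain (· ⊆ ·) c)
    (hne : c.Nonempty) : ⋂₀ c ∈ nonemptyClosedInvariantSets S := by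
  have : Nonempty c := hne.to_subtype
  have hclosed : ∀ K ∈ c, IsClosed K := fun K hK => (hc hK).2.1
  refine ⟨?_, isClosed_sInter hclosed, fun T hT => ?_⟩
  · exact IsCompact.nonempty_sInter_of_directed_nonempty_isCompact_isClosed
      (IsChain.directedOn hchain.symm) (fun K hK => (hc hK).1)
      (fun K hK => (hclosed K hK).isCompact) hclosed
  · exact mapsTo_sInter.2 fun K hK => ((hc hK).2.2 T hT).mono_left (sInter_subset_of_mem hK)

theorem exists_minimal_mem_nonemptyClosedInvariantSets [CompactSpace X] [Nonempty X]
    (S : Set (X → X)) : ∃ K, Minimal (· ∈ nonemptyClosedInvariantSets S) K := by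
  have huniv : univ ∈ nonemptyClosedInvariantSets S :=
    ⟨univ_nonempty, isClosed_univ, fun T _ => mapsTo_univ T univ⟩
  obtain ⟨K, -, hK⟩ := zorn_superset_nonempty _
    (fun c hc hchain hne => ⟨⋂₀ c, sInter_mem_nonemptyClosedInvariantSets hc hchain hne,
      fun _ => sInter_subset_of_mem⟩) univ huniv
  exact ⟨K, hK⟩

theorem image_eq_of_minimal_mem_nonemptyClosedInvariantSets [CompactSpace X] [T2Space X]
    {S : Set (X → X)} {K : Set X} (hK : Minimal (· ∈ nonemptyClosedInvariantSets S) K)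
    {T : X → X} (hT : Continuous T) (hTK : MapsTo T K K) (hcomm : ∀ P ∈ S, T ∘ P = P ∘ T) :
    T '' K = K := by
  obtain ⟨hne, hclosed, hinv⟩ := hK.prop
  have himage : T '' K ∈ nonemptyClosedInvariantSets S := by
    refine ⟨hne.image T, (hclosed.isCompact.image hT).isClosed, fun P hP => ?_⟩
    rw [mapsTo_iff_image_subset, ← image_comp, ← hcomm P hP, image_comp]
    exact image_mono (hinv P hP).image_subset
  exact hK.eq_of_subset himage hTK.image_subset

end

theorem stmt9_general {C : Type*} [TopologicalSpace C] [CompactSpace C] [T2Space C]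
    [Nonempty C] (S : Set (C → C))
    (hcont : ∀ T ∈ S, Continuous T)
    (hcomm : ∀ T ∈ S, ∀ P ∈ S, T ∘ P = P ∘ T) :
    ∃ D : Set C, D.Nonempty ∧ ∀ T ∈ S, T '' D = D := by
  obtain ⟨D, hD⟩ := exists_minimal_mem_nonemptyClosedInvariantSets S
  exact ⟨D, hD.prop.1, fun T hT => image_eq_of_minimal_mem_nonemptyClosedInvariantSets hD
    (hcont T hT) (hD.prop.2.2 T hT) (hcomm T hT)⟩

/-- Every commuting semigroup of continuous self-maps of a nonempty compact
Hausdorff space is subsurjective: there is a nonempty `D` with `T(D) = D`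
for every member `T`. -/
theorem stmt9 {C : Type*} [TopologicalSpace C] [CompactSpace C] [T2Space C]
    [Nonempty C] (S : Set (C → C))
    (hcont : ∀ T ∈ S, Continuous T)
    (hcomp : ∀ T ∈ S, ∀ P ∈ S, T ∘ P ∈ S)
    (hcomm : ∀ T ∈ S, ∀ P ∈ S, T ∘ P = P ∘ T) :
    ∃ D : Set C, D.Nonempty ∧ ∀ T ∈ S, T '' D = D :=
  stmt9_general S hcont hcomm
end

section
/- Let C be a nonempty compact metric space (or compact Hausdorff space) and S a commuting family of continuous uniformly asymptotically regular self-maps of C. Then S has a common fixed point. -/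
/-!
The monoid generated by `S` is commutative, so the ranges of its elements form a downward
directed family of nonempty compact sets (`range (f ∘ g) ⊆ range f ∩ range g`), and some point
`y` lies in all of them. For `T ∈ S` and every `n` we then have `y = T^[n] x` for some `x`, so
`dist (T y) y ≤ ⨆ x, dist (T^[n + 1] x) (T^[n] x)`, which tends to `0`.
-/

open Function Set Filter Topology

theorem Submonoid.commute_of_mem_closure {M : Type*} [Monoid M] {s : Set M}
    (hs : ∀ a ∈ s, ∀ b ∈ s, a * b = b * a) {a b : M} (ha : a ∈ closure s)
    (hb : b ∈ closure s) : Commute a b :=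
  Set.centralizer_centralizer_comm_of_comm hs _ (closure_le_centralizer_centralizer s ha) _
    (closure_le_centralizer_centralizer s hb)

theorem Submonoid.continuous_of_mem_closure {X : Type*} [TopologicalSpace X]
    {s : Set (Function.End X)} (hs : ∀ f ∈ s, Continuous f) {f : Function.End X}
    (hf : f ∈ closure s) : Continuous f := by
  induction hf using Submonoid.closure_induction with
  | mem f hf => exact hs f hf
  | one => exact continuous_id
  | mul f g _ _ hf hg => exact hf.comp hg

theorem Submonoid.exists_forall_mem_range_of_commute {X : Type*} [TopologicalSpace X]
    [CompactSpace X] [T2Space X] [Nonempty X] (M : Submonoid (Function.End X))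
    (hcont : ∀ f ∈ M, Continuous f) (hcomm : ∀ f ∈ M, ∀ g ∈ M, Commute f g) :
    ∃ y, ∀ f ∈ M, y ∈ range f := by
  have : Nonempty M := ⟨1⟩
  have hdir : Directed (· ⊇ ·) fun f : M => range (f : Function.End X) := by
    rintro ⟨f, hf⟩ ⟨g, hg⟩
    refine ⟨⟨f * g, M.mul_mem hf hg⟩, range_comp_subset_range (g : Function.End X) f, ?_⟩
    change range (f * g : Function.End X) ⊆ range g
    rw [(hcomm f hf g hg).eq]
    exact range_comp_subset_range (f : Function.End X) g
  obtain ⟨y, hy⟩ := IsCompact.nonempty_iInter_of_directed_nonempty_isCompact_isClosed _ hdir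
    (fun _ => range_nonempty _) (fun f => isCompact_range (hcont f f.2))
    (fun f => (isCompact_range (hcont f f.2)).isClosed)
  exact ⟨y, fun f hf => mem_iInter.1 hy ⟨f, hf⟩⟩

theorem isFixedPt_of_tendsto_iSup_dist_iterate {X : Type*} [MetricSpace X] [BoundedSpace X]
    {T : X → X} (hT : Tendsto (fun n : ℕ => ⨆ x, dist (T^[n + 1] x) (T^[n] x)) atTop (𝓝 0))
    {y : X} (hy : ∀ n, y ∈ range T^[n]) : IsFixedPt T y := by
  have hbdd : ∀ n, BddAbove (range fun x => dist (T^[n + 1] x) (T^[n] x)) := by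
    refine fun n => ⟨Metric.diam (univ : Set X), ?_⟩
    rintro _ ⟨x, rfl⟩
    exact Metric.dist_le_diam_of_mem (Bornology.isBounded_univ.2 ‹_›) (mem_univ _) (mem_univ _)
  have hle : ∀ n, dist (T y) y ≤ ⨆ x, dist (T^[n + 1] x) (T^[n] x) := by
    intro n
    obtain ⟨x, rfl⟩ := hy n
    rw [← iterate_succ_apply' T n x]
    exact le_ciSup (hbdd n) x
  exact dist_le_zero.1 (ge_of_tendsto' hT hle)

/-- A commuting family of continuous uniformly asymptotically regular
self-maps of a nonempty compact metric space has a common fixed point. -/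
theorem stmt11 {C : Type*} [MetricSpace C] [CompactSpace C] [Nonempty C]
    (S : Set (C → C))
    (hcont : ∀ T ∈ S, Continuous T)
    (hcomm : ∀ T ∈ S, ∀ P ∈ S, T ∘ P = P ∘ T)
    (hUAR : ∀ T ∈ S, Tendsto
      (fun n : ℕ => ⨆ x : C, dist (T^[n + 1] x) (T^[n] x)) atTop (𝓝 0)) :
    ∃ x : C, ∀ T ∈ S, T x = x := by
  let M : Submonoid (Function.End C) := Submonoid.closure S
  obtain ⟨y, hy⟩ := M.exists_forall_mem_range_of_commute
    (fun _ hf => Submonoid.continuous_of_mem_closure hcont hf)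
    (fun _ hf _ hg => Submonoid.commute_of_mem_closure hcomm hf hg)
  exact ⟨y, fun T hT => isFixedPt_of_tendsto_iSup_dist_iterate (hUAR T hT)
    fun n => hy T^[n] (pow_mem (Submonoid.subset_closure (M := Function.End C) hT) n)⟩
end

section
/- Let C be a nonempty bounded subset of a Banach space that is compact in some Hausdorff topology τ making each mapping continuous. If S is a commuting family of τ-continuous firmly nonexpansive (in norm) self-maps of C, then S has a common fixed point. -/
/-!
Taking `α = 1/2` in firm nonexpansiveness gives `2‖Tx - Ty‖ ≤ ‖x - y + (Tx - Ty)‖`. On a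
`τ`-compact `T`-invariant set `K`, the set `⋂ n, Tⁿ(K)` is nonempty and mapped onto itself, so `T`
has a backward orbit `T x (k + 1) = x k` in `K`. Along it the steps `‖x (k + 1) - x k‖` increase to
some `c`, and the inequality above propagates to `‖x (b + n) - x b‖ ≥ n c - ε` for large `b`;
boundedness forces `c = 0`, so `x 0` is fixed. Commutativity makes the common fixed points of
finitely many maps of `S` invariant under the others, and `τ`-compactness turns this finite
intersection property into a common fixed point.
-/

open Function Set Filter Topology

theorem two_mul_norm_sub_le_of_forall_mem_Ioo {E : Type*} [NormedAddCommGroup E]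
    [NormedSpace ℝ E] {u v u' v' : E}
    (h : ∀ α ∈ Ioo (0 : ℝ) 1, ‖u' - v'‖ ≤ ‖α • (u - v) + (1 - α) • (u' - v')‖) :
    2 * ‖u' - v'‖ ≤ ‖u - v + (u' - v')‖ := by
  have := h (1 / 2) ⟨by norm_num, by norm_num⟩
  rw [show (1 : ℝ) - 1 / 2 = 1 / 2 by norm_num, ← smul_add, norm_smul] at this
  norm_num at this
  linarith

section BackwardFirmlyNonexpansive

variable {E : Type*} [NormedAddCommGroup E] {y : ℕ → E}

theorem norm_sub_le_of_norm_succ_sub_le {c : ℝ} (hc : ∀ k, ‖y (k + 1) - y k‖ ≤ c) (b : ℕ) :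
    ∀ n : ℕ, ‖y (b + n) - y b‖ ≤ n * c
  | 0 => by simp
  | n + 1 => by
    have ih := norm_sub_le_of_norm_succ_sub_le hc b n
    calc ‖y (b + n + 1) - y b‖ ≤ ‖y (b + n + 1) - y (b + n)‖ + ‖y (b + n) - y b‖ :=
          norm_sub_le_norm_sub_add_norm_sub _ _ _
      _ ≤ (n + 1 : ℕ) * c := by push_cast; linarith [hc (b + n)]

theorem norm_sub_le_norm_succ_sub_succ
    (h : ∀ i j, 2 * ‖y i - y j‖ ≤ ‖y (i + 1) - y (j + 1) + (y i - y j)‖) (i j : ℕ) :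
    ‖y i - y j‖ ≤ ‖y (i + 1) - y (j + 1)‖ := by
  linarith [h i j, norm_add_le (y (i + 1) - y (j + 1)) (y i - y j)]

theorem eventually_mul_sub_le_norm_sub
    (h : ∀ i j, 2 * ‖y i - y j‖ ≤ ‖y (i + 1) - y (j + 1) + (y i - y j)‖) {c : ℝ}
    (hc : ∀ k, ‖y (k + 1) - y k‖ ≤ c)
    (hlim : Tendsto (fun k => ‖y (k + 1) - y k‖) atTop (𝓝 c)) (n : ℕ) {ε : ℝ} (hε : 0 < ε) :
    ∀ᶠ b in atTop, (n + 1) * c - ε ≤ ‖y (b + n + 1) - y b‖ := by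
  induction n generalizing ε with
  | zero => simpa using (hlim.eventually (lt_mem_nhds (sub_lt_self c hε))).mono fun _ => le_of_lt
  | succ n ih =>
    filter_upwards [ih (half_pos hε)] with b hb
    -- `h` at `(b + n + 1, b)` bounds twice a chord of length `n + 1` by chords of lengths
    -- `n + 2` and `n`; the latter is at most `n * c`.
    have hsplit : y (b + n + 2) - y (b + 1) + (y (b + n + 1) - y b)
        = (y (b + n + 2) - y b) + (y (b + 1 + n) - y (b + 1)) := by
      rw [add_right_comm b 1 n]; abel
    have hkey := h (b + n + 1) b
    rw [hsplit] at hkey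
    have hupper := norm_sub_le_of_norm_succ_sub_le hc (b + 1) n
    change _ ≤ ‖y (b + n + 2) - y b‖
    push_cast
    linarith [norm_add_le (y (b + n + 2) - y b) (y (b + 1 + n) - y (b + 1))]

theorem succ_eq_of_isBounded_range
    (h : ∀ i j, 2 * ‖y i - y j‖ ≤ ‖y (i + 1) - y (j + 1) + (y i - y j)‖)
    (hy : Bornology.IsBounded (range y)) (k : ℕ) :
    y (k + 1) = y k := by
  obtain ⟨M, hM⟩ := Metric.isBounded_iff.mp hy
  have hdist (i j : ℕ) : ‖y i - y j‖ ≤ M := by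
    rw [← dist_eq_norm]; exact hM (mem_range_self i) (mem_range_self j)
  set d : ℕ → ℝ := fun k => ‖y (k + 1) - y k‖
  have hmono : Monotone d := monotone_nat_of_le_succ fun k =>
    norm_sub_le_norm_succ_sub_succ h (k + 1) k
  have hbdd : BddAbove (range d) := ⟨M, forall_mem_range.mpr fun k => hdist _ _⟩
  set c := ⨆ k, d k
  have hdc (k : ℕ) : d k ≤ c := le_ciSup hbdd k
  have hgrowth (n : ℕ) : (n + 1) * c - 1 ≤ M := by
    obtain ⟨b, hb⟩ := (eventually_mul_sub_le_norm_sub h hdc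
      (tendsto_atTop_ciSup hmono hbdd) n one_pos).exists
    exact hb.trans (hdist _ _)
  have hc : c ≤ 0 := by
    by_contra! hc
    obtain ⟨n, hn⟩ := exists_nat_gt ((M + 1) / c)
    rw [div_lt_iff₀ hc] at hn
    linarith [hgrowth n]
  exact sub_eq_zero.mp (norm_le_zero_iff.mp ((hdc k).trans hc))

end BackwardFirmlyNonexpansive

theorem fixedPt_of_backward_orbit {E : Type*} [NormedAddCommGroup E] {T : E → E} {D : Set E}
    (hD : Bornology.IsBounded D)
    (hT : ∀ x ∈ D, ∀ y ∈ D, 2 * ‖T x - T y‖ ≤ ‖x - y + (T x - T y)‖)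
    {x : ℕ → E} (hx : ∀ k, x k ∈ D) (horb : ∀ k, T (x (k + 1)) = x k) : T (x 0) = x 0 := by
  have hfirm (i j : ℕ) : 2 * ‖x i - x j‖ ≤ ‖x (i + 1) - x (j + 1) + (x i - x j)‖ := by
    simpa only [horb] using hT _ (hx (i + 1)) _ (hx (j + 1))
  have h10 := succ_eq_of_isBounded_range hfirm (hD.subset (range_subset_iff.mpr hx)) 0
  simpa [h10] using horb 0

section BackwardOrbit

variable {X : Type*} {K : Set X} {f : X → X}

theorem exists_backward_orbit_of_surjOn (hne : K.Nonempty) (hf : SurjOn f K K) :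
    ∃ x : ℕ → X, (∀ k, x k ∈ K) ∧ ∀ k, f (x (k + 1)) = x k := by
  obtain ⟨x₀, hx₀⟩ := hne
  have : Nonempty X := ⟨x₀⟩
  have hmem (k : ℕ) : (invFunOn f K)^[k] x₀ ∈ K := hf.mapsTo_invFunOn.iterate k hx₀
  refine ⟨fun k => (invFunOn f K)^[k] x₀, hmem, fun k => ?_⟩
  change f ((invFunOn f K)^[k + 1] x₀) = _
  rw [iterate_succ_apply']
  exact hf.rightInvOn_invFunOn (hmem k)

theorem iterate_succ_image_subset (hf : MapsTo f K K) (n : ℕ) :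
    f^[n + 1] '' K ⊆ f^[n] '' K := by
  rw [iterate_succ, image_comp]
  exact image_mono hf.image_subset

variable [TopologicalSpace X]

theorem IsCompact.isCompact_iterate_image (hK : IsCompact K) (hf : MapsTo f K K)
    (hfc : ContinuousOn f K) (n : ℕ) : IsCompact (f^[n] '' K) :=
  hK.image_of_continuousOn (hfc.iterate hf n)

variable [T2Space X]

theorem IsCompact.nonempty_iInter_iterate_image (hK : IsCompact K) (hne : K.Nonempty)
    (hf : MapsTo f K K) (hfc : ContinuousOn f K) : (⋂ n, f^[n] '' K).Nonempty :=
  IsCompact.nonempty_iInter_of_sequence_nonempty_isCompact_isClosed _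
    (iterate_succ_image_subset hf) (fun _ => hne.image _) (hK.isCompact_iterate_image hf hfc 0)
    (fun n => (hK.isCompact_iterate_image hf hfc n).isClosed)

theorem IsCompact.surjOn_iInter_iterate_image (hK : IsCompact K) (hf : MapsTo f K K)
    (hfc : ContinuousOn f K) : SurjOn f (⋂ n, f^[n] '' K) (⋂ n, f^[n] '' K) := by
  intro y hy
  have hcpt := hK.isCompact_iterate_image hf hfc
  have hclosed (n : ℕ) : IsClosed (f^[n] '' K ∩ f ⁻¹' {y}) :=
    (hfc.mono ((hf.iterate n).image_subset)).preimage_isClosed_of_isClosed (hcpt n).isClosed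
      isClosed_singleton
  -- `y ∈ f^[n+1] '' K = f '' (f^[n] '' K)` gives a preimage of `y` at every level.
  have hne (n : ℕ) : (f^[n] '' K ∩ f ⁻¹' {y}).Nonempty := by
    have hyn : y ∈ f '' (f^[n] '' K) := by
      rw [← image_comp, ← iterate_succ']
      exact mem_iInter.mp hy (n + 1)
    obtain ⟨z, hz, rfl⟩ := hyn
    exact ⟨z, hz, rfl⟩
  obtain ⟨z, hz⟩ := IsCompact.nonempty_iInter_of_sequence_nonempty_isCompact_isClosed _
    (fun n => inter_subset_inter_left _ (iterate_succ_image_subset hf n)) hne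
    ((hcpt 0).of_isClosed_subset (hclosed 0) inter_subset_left) hclosed
  exact ⟨z, mem_iInter.mpr fun n => (mem_iInter.mp hz n).1, (mem_iInter.mp hz 0).2⟩

theorem IsCompact.exists_backward_orbit (hK : IsCompact K) (hne : K.Nonempty)
    (hf : MapsTo f K K) (hfc : ContinuousOn f K) :
    ∃ x : ℕ → X, (∀ k, x k ∈ K) ∧ ∀ k, f (x (k + 1)) = x k := by
  obtain ⟨x, hxK, hx⟩ := exists_backward_orbit_of_surjOn
    (hK.nonempty_iInter_iterate_image hne hf hfc) (hK.surjOn_iInter_iterate_image hf hfc)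
  exact ⟨x, fun k => by simpa using mem_iInter.mp (hxK k) 0, hx⟩

end BackwardOrbit

theorem exists_common_fixedPt_of_commute {X : Type*} [TopologicalSpace X] [T2Space X]
    {C : Set X} (hC : IsCompact C) (hCne : C.Nonempty) {S : Set (X → X)}
    (hmaps : ∀ T ∈ S, MapsTo T C C) (hcont : ∀ T ∈ S, ContinuousOn T C)
    (hcomm : ∀ T ∈ S, ∀ P ∈ S, ∀ x ∈ C, T (P x) = P (T x))
    (hfix : ∀ T ∈ S, ∀ K ⊆ C, IsCompact K → K.Nonempty → MapsTo T K K → ∃ x ∈ K, T x = x) :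
    ∃ x ∈ C, ∀ T ∈ S, T x = x := by
  classical
  let F (P : S) : Set X := {x ∈ C | (P : X → X) x = x}
  have hF (P : S) : IsClosed (F P) := hC.isClosed.isClosed_eq (hcont P P.2) continuousOn_id
  have hfin (u : Finset S) : (C ∩ ⋂ P ∈ u, F P).Nonempty := by
    induction u using Finset.induction_on with
    | empty => simpa using hCne
    | insert T u _ ih =>
      set K := C ∩ ⋂ P ∈ u, F P
      have hK : IsCompact K := hC.inter_right (isClosed_biInter fun P _ => hF P)
      have hTK : MapsTo T K K := by
        refine fun z ⟨hzC, hz⟩ => ⟨hmaps T T.2 hzC, mem_iInter₂.mpr fun P hP => ?_⟩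
        obtain ⟨-, hPz⟩ := mem_iInter₂.mp hz P hP
        refine ⟨hmaps T T.2 hzC, ?_⟩
        rw [← hcomm T T.2 P P.2 z hzC, hPz]
      obtain ⟨x, ⟨hxC, hx⟩, hTx⟩ := hfix T T.2 K inter_subset_left hK ih hTK
      exact ⟨x, hxC, by rw [Finset.set_biInter_insert]; exact ⟨⟨hxC, hTx⟩, hx⟩⟩
  obtain ⟨x, hxC, hx⟩ := hC.inter_iInter_nonempty F hF hfin
  exact ⟨x, hxC, fun T hT => (mem_iInter.mp hx ⟨T, hT⟩).2⟩

theorem stmt12_general {E : Type*} [NormedAddCommGroup E] [NormedSpace ℝ E]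
    (t : TopologicalSpace E) (ht2 : @T2Space E t)
    (C : Set E) (hCne : C.Nonempty) (hbd : Bornology.IsBounded C)
    (hcomp : @IsCompact E t C)
    (S : Set (E → E))
    (hmaps : ∀ T ∈ S, Set.MapsTo T C C)
    (hcont : ∀ T ∈ S, @ContinuousOn E E t t T C)
    (hcomm : ∀ T ∈ S, ∀ P ∈ S, ∀ x ∈ C, T (P x) = P (T x))
    (hfne : ∀ T ∈ S, ∀ x ∈ C, ∀ y ∈ C, ∀ α ∈ Set.Ioo (0 : ℝ) 1,
      ‖T x - T y‖ ≤ ‖α • (x - y) + (1 - α) • (T x - T y)‖) :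
    ∃ x ∈ C, ∀ T ∈ S, T x = x := by
  refine @exists_common_fixedPt_of_commute E t ht2 C hcomp hCne S hmaps hcont hcomm ?_
  intro T hT K hKC hK hKne hTK
  obtain ⟨x, hxK, horb⟩ :=
    @IsCompact.exists_backward_orbit E K T t ht2 hK hKne hTK ((hcont T hT).mono hKC)
  have hfirm : ∀ u ∈ C, ∀ v ∈ C, 2 * ‖T u - T v‖ ≤ ‖u - v + (T u - T v)‖ :=
    fun u hu v hv => two_mul_norm_sub_le_of_forall_mem_Ioo (hfne T hT u hu v hv)
  exact ⟨x 0, hxK 0, fixedPt_of_backward_orbit hbd hfirm (fun k => hKC (hxK k)) horb⟩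

/-- A commuting family of `τ`-continuous, firmly nonexpansive (in norm)
self-maps of a nonempty bounded, `τ`-compact subset of a Banach space has a
common fixed point. Here `t` is a Hausdorff topology on `E` for which `C`
is compact and each member of the family is continuous on `C`. -/
theorem stmt12 {E : Type*} [NormedAddCommGroup E] [NormedSpace ℝ E]
    [CompleteSpace E] (t : TopologicalSpace E) (ht2 : @T2Space E t)
    (C : Set E) (hCne : C.Nonempty) (hbd : Bornology.IsBounded C)
    (hcomp : @IsCompact E t C)
    (S : Set (E → E))
    (hmaps : ∀ T ∈ S, Set.MapsTo T C C)
    (hcont : ∀ T ∈ S, @ContinuousOn E E t t T C)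
    (hcomm : ∀ T ∈ S, ∀ P ∈ S, ∀ x ∈ C, T (P x) = P (T x))
    (hfne : ∀ T ∈ S, ∀ x ∈ C, ∀ y ∈ C, ∀ α ∈ Set.Ioo (0 : ℝ) 1,
      ‖T x - T y‖ ≤ ‖α • (x - y) + (1 - α) • (T x - T y)‖) :
    ∃ x ∈ C, ∀ T ∈ S, T x = x :=
  stmt12_general t ht2 C hCne hbd hcomp S hmaps hcont hcomm hfne
end

section
/- Let C be a convex bounded subset of a Banach space, S : C → C affine, α ∈ (0,1), and T = αI + (1−α)S. Then T is uniformly asymptotically regular: lim_{n→∞} sup_{x∈C} ‖T^{n+1}x − T^n x‖ = 0. -/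
/-!
Write `q = 1 - α`. The orbit map `y ↦ (k ↦ S^[k] y)` intertwines `T` with the operator `α + q σ` on
sequences, `σ` the shift, so the binomial theorem gives `T^[n] x = ∑ₖ bₙₖ(q) • S^[k] x` with the
Bernstein weights `bₙₖ(q) = (n choose k) qᵏ αⁿ⁻ᵏ`. As both weight families sum to one,
`T^[n+1] x - T^[n] x = ∑ₖ (bₙ₊₁ₖ - bₙₖ) • (S^[k] x - x)` has norm at most
`diam C · ∑ₖ |bₙ₊₁ₖ - bₙₖ|`, uniformly in `x`. The identity `(n+1) α bₙₖ = (n+1-k) bₙ₊₁ₖ` turns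
this sum into `∑ₖ bₙ₊₁ₖ |k - (n+1) q| / ((n+1) α)`, a mean absolute deviation of the binomial law,
which Cauchy–Schwarz and the variance `(n+1) q α` bound by `√(q / ((n+1) α))`.
-/

open Finset Polynomial Filter Topology

namespace bernsteinPolynomial

theorem succ_mul_one_sub_X_mul {R : Type*} [CommRing R] (n k : ℕ) :
    ((n + 1 : R[X]) * (1 - X)) * bernsteinPolynomial R n k =
      ((n + 1 - k : ℕ) : R[X]) * bernsteinPolynomial R (n + 1) k := by
  rcases le_or_gt k n with hk | hk
  · have hchoose := congrArg (Nat.cast : ℕ → R[X]) (Nat.choose_mul_succ_eq n k)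
    push_cast at hchoose
    have hpow : (1 - X : R[X]) ^ (n + 1 - k) = (1 - X) ^ (n - k) * (1 - X) := by
      rw [Nat.sub_add_comm hk, pow_succ]
    rw [bernsteinPolynomial, bernsteinPolynomial, hpow]
    linear_combination (X ^ k * (1 - X) ^ (n - k) * (1 - X)) * hchoose
  · rw [bernsteinPolynomial.eq_zero_of_lt R hk, Nat.sub_eq_zero_of_le hk]
    simp

theorem eval_nonneg {x : ℝ} (hx : x ∈ Set.Icc (0 : ℝ) 1) (n k : ℕ) :
    0 ≤ (bernsteinPolynomial ℝ n k).eval x := by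
  have hx0 := hx.1
  have hx1 := sub_nonneg.2 hx.2
  simp only [bernsteinPolynomial, eval_mul, eval_pow, eval_sub, eval_one, eval_X, eval_natCast]
  positivity

theorem eval_sum (n : ℕ) (x : ℝ) :
    ∑ k ∈ range (n + 1), (bernsteinPolynomial ℝ n k).eval x = 1 := by
  simpa [eval_finsetSum] using congrArg (eval x) (bernsteinPolynomial.sum ℝ n)

theorem eval_variance (n : ℕ) (x : ℝ) :
    ∑ k ∈ range (n + 1), (bernsteinPolynomial ℝ n k).eval x * (k - n * x) ^ 2 =
      n * x * (1 - x) := by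
  have := congrArg (eval x) (bernsteinPolynomial.variance ℝ n)
  simp only [eval_finsetSum, eval_mul, eval_pow, eval_sub, eval_X, eval_natCast,
    eval_one, nsmul_eq_mul] at this
  rw [← this]
  exact sum_congr rfl fun k _ => by ring

theorem sum_eval_mul_abs_sq_le {x : ℝ} (hx : x ∈ Set.Icc (0 : ℝ) 1) (n : ℕ) :
    (∑ k ∈ range (n + 1), (bernsteinPolynomial ℝ n k).eval x * |k - n * x|) ^ 2 ≤
      n * x * (1 - x) := by
  calc _ ≤ (∑ k ∈ range (n + 1), (bernsteinPolynomial ℝ n k).eval x) *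
        ∑ k ∈ range (n + 1), (bernsteinPolynomial ℝ n k).eval x * (k - n * x) ^ 2 :=
        sum_sq_le_sum_mul_sum_of_sq_le_mul _ (fun k _ => eval_nonneg hx n k)
          (fun k _ => mul_nonneg (eval_nonneg hx n k) (sq_nonneg _))
          (fun k _ => by rw [mul_pow, sq_abs, sq, mul_assoc])
    _ = n * x * (1 - x) := by rw [eval_sum, eval_variance, one_mul]

theorem abs_eval_succ_sub_eval_mul {x : ℝ} (hx : x ∈ Set.Icc (0 : ℝ) 1)
    (n k : ℕ) (hk : k ≤ n + 1) :
    |(bernsteinPolynomial ℝ (n + 1) k).eval x - (bernsteinPolynomial ℝ n k).eval x| *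
        ((n + 1) * (1 - x)) =
      (bernsteinPolynomial ℝ (n + 1) k).eval x * |k - (n + 1 : ℕ) * x| := by
  have h := congrArg (eval x) (succ_mul_one_sub_X_mul (R := ℝ) n k)
  simp only [eval_mul, eval_add, eval_sub, eval_natCast, eval_one, eval_X, Nat.cast_sub hk] at h
  have hsigned : ((bernsteinPolynomial ℝ (n + 1) k).eval x - (bernsteinPolynomial ℝ n k).eval x) *
      ((n + 1) * (1 - x)) = (bernsteinPolynomial ℝ (n + 1) k).eval x * (k - (n + 1 : ℕ) * x) := by
    push_cast at h ⊢
    linear_combination (-1 : ℝ) * h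
  rw [← abs_of_nonneg (mul_nonneg (by positivity : (0:ℝ) ≤ n + 1) (sub_nonneg.2 hx.2)),
    ← abs_mul, hsigned, abs_mul, abs_of_nonneg (eval_nonneg hx (n + 1) k)]

theorem sum_range_succ_succ_eval_smul {M : Type*} [AddCommMonoid M] [Module ℝ M] (n : ℕ) (x : ℝ)
    (f : ℕ → M) :
    ∑ k ∈ range (n + 2), (bernsteinPolynomial ℝ n k).eval x • f k =
      ∑ k ∈ range (n + 1), (bernsteinPolynomial ℝ n k).eval x • f k := by
  rw [sum_range_succ _ (n + 1), eq_zero_of_lt ℝ n.lt_succ_self, eval_zero, zero_smul, add_zero]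

theorem tendsto_sum_abs_eval_succ_sub_eval {x : ℝ} (hx : x ∈ Set.Ico (0 : ℝ) 1) :
    Tendsto (fun n : ℕ => ∑ k ∈ range (n + 2),
      |(bernsteinPolynomial ℝ (n + 1) k).eval x - (bernsteinPolynomial ℝ n k).eval x|)
      atTop (𝓝 0) := by
  have hx' : x ∈ Set.Icc (0 : ℝ) 1 := Set.Ico_subset_Icc_self hx
  have hx1 : 0 < 1 - x := sub_pos.2 hx.2
  have hbound : ∀ n : ℕ, (∑ k ∈ range (n + 2),
      |(bernsteinPolynomial ℝ (n + 1) k).eval x - (bernsteinPolynomial ℝ n k).eval x|) ≤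
      √(x / (1 - x) / (n + 1)) := by
    intro n
    have hN : (0 : ℝ) < (n + 1) * (1 - x) := by positivity
    apply Real.le_sqrt_of_sq_le
    rw [div_div, le_div_iff₀ (by positivity)]
    have := sum_eval_mul_abs_sq_le hx' (n + 1)
    rw [← sum_congr rfl fun k hk => abs_eval_succ_sub_eval_mul hx' n k
      (Nat.lt_succ_iff.1 (mem_range.1 hk)), ← sum_mul, mul_pow] at this
    push_cast at this
    exact le_of_mul_le_mul_right (by linear_combination this) hN
  have hlim : Tendsto (fun n : ℕ => √(x / (1 - x) / (n + 1))) atTop (𝓝 0) := by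
    simpa [div_eq_mul_inv] using
      (tendsto_one_div_add_atTop_nhds_zero_nat.const_mul (x / (1 - x))).sqrt
  exact squeeze_zero (fun n => sum_nonneg fun k _ => abs_nonneg _) hbound hlim

end bernsteinPolynomial

section AffineOn

variable {E : Type*} [AddCommGroup E] [Module ℝ E]

def AffineOn (C : Set E) (S : E → E) : Prop :=
  ∀ x ∈ C, ∀ y ∈ C, ∀ lam ∈ Set.Icc (0 : ℝ) 1,
    S (lam • x + (1 - lam) • y) = lam • S x + (1 - lam) • S y

theorem AffineOn.iterate {C : Set E} {S : E → E} (h : AffineOn C S) (hS : Set.MapsTo S C C) :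
    ∀ k : ℕ, AffineOn C S^[k]
  | 0 => fun _ _ _ _ _ _ => rfl
  | k + 1 => fun x hx y hy lam hlam => by
    rw [Function.iterate_succ_apply, Function.iterate_succ_apply, Function.iterate_succ_apply,
      h x hx y hy lam hlam, h.iterate hS k _ (hS hx) _ (hS hy) lam hlam]

theorem LinearMap.funLeft_succ_pow_apply_zero {R M : Type*} [Semiring R] [AddCommMonoid M]
    [Module R M] (j : ℕ) (y : ℕ → M) :
    (LinearMap.funLeft R M Nat.succ ^ j) y 0 = y j := by
  induction j generalizing y with
  | zero => rfl
  | succ j ih => rw [pow_succ, Module.End.mul_apply, ih]; rfl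

theorem AffineOn.iterate_average_eq_sum_bernstein {C : Set E} (hC : Convex ℝ C) {S : E → E}
    (h : AffineOn C S) (hS : Set.MapsTo S C C) {α : ℝ} (hα : α ∈ Set.Icc (0 : ℝ) 1)
    (n : ℕ) {x : E} (hx : x ∈ C) :
    (fun y => α • y + (1 - α) • S y)^[n] x =
      ∑ k ∈ range (n + 1), (bernsteinPolynomial ℝ n k).eval (1 - α) • S^[k] x := by
  set T : E → E := fun y => α • y + (1 - α) • S y
  set σ : Module.End ℝ (ℕ → E) := LinearMap.funLeft ℝ E Nat.succ
  set L : Module.End ℝ (ℕ → E) := (1 - α) • σ + algebraMap ℝ _ α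
  have hT : Set.MapsTo T C C := fun y hy => hC hy (hS hy) hα.1 (by linarith [hα.2]) (by ring)
  have horbit : ∀ y ∈ C, (fun k => S^[k] (T y)) = L (fun k => S^[k] y) := by
    intro y hy
    funext k
    rw [h.iterate hS k y hy (S y) (hS hy) α hα]
    simp [L, σ, LinearMap.funLeft_apply, add_comm]
  have hpow : ∀ m, ∀ y ∈ C, (fun k => S^[k] (T^[m] y)) = (L ^ m) (fun k => S^[k] y) := by
    intro m
    induction m with
    | zero => intro y _; rfl
    | succ m ih =>
      intro y hy
      rw [Function.iterate_succ_apply', horbit _ (hT.iterate m hy), ih y hy, pow_succ',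
        Module.End.mul_apply]
  rw [show T^[n] x = (L ^ n) (fun k => S^[k] x) 0 from congrFun (hpow n x hx) 0,
    Commute.add_pow (Algebra.commutes α _).symm n]
  simp only [LinearMap.sum_apply, Finset.sum_apply, Module.End.mul_apply, _root_.smul_pow,
    ← map_pow, Module.algebraMap_end_apply, Module.End.natCast_apply, LinearMap.smul_apply,
    Pi.smul_apply, σ, LinearMap.funLeft_succ_pow_apply_zero, bernsteinPolynomial, eval_mul,
    eval_pow, eval_sub, eval_one, eval_X, eval_natCast]
  exact sum_congr rfl fun k _ => by module

end AffineOn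

theorem norm_sum_smul_le_of_sum_eq_zero {ι E : Type*} [SeminormedAddCommGroup E]
    [NormedSpace ℝ E] (s : Finset ι) {c : ι → ℝ} (hc : ∑ i ∈ s, c i = 0) (y : ι → E) (z : E)
    {D : ℝ} (hD : ∀ i ∈ s, ‖y i - z‖ ≤ D) :
    ‖∑ i ∈ s, c i • y i‖ ≤ (∑ i ∈ s, |c i|) * D := by
  have hcenter : ∑ i ∈ s, c i • y i = ∑ i ∈ s, c i • (y i - z) := by
    simp only [smul_sub, sum_sub_distrib, ← sum_smul, hc, zero_smul, sub_zero]
  rw [hcenter, sum_mul]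
  refine (norm_sum_le _ _).trans (sum_le_sum fun i hi => ?_)
  rw [norm_smul, Real.norm_eq_abs]
  exact mul_le_mul_of_nonneg_left (hD i hi) (abs_nonneg _)

theorem AffineOn.norm_iterate_average_succ_sub_le {E : Type*} [NormedAddCommGroup E]
    [NormedSpace ℝ E] {C : Set E} (hC : Convex ℝ C) (hbd : Bornology.IsBounded C) {S : E → E}
    (h : AffineOn C S) (hS : Set.MapsTo S C C) {α : ℝ} (hα : α ∈ Set.Icc (0 : ℝ) 1)
    (n : ℕ) {x : E} (hx : x ∈ C) :
    ‖(fun y => α • y + (1 - α) • S y)^[n + 1] x - (fun y => α • y + (1 - α) • S y)^[n] x‖ ≤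
      (∑ k ∈ range (n + 2), |(bernsteinPolynomial ℝ (n + 1) k).eval (1 - α) -
        (bernsteinPolynomial ℝ n k).eval (1 - α)|) * Metric.diam C := by
  rw [h.iterate_average_eq_sum_bernstein hC hS hα _ hx,
    h.iterate_average_eq_sum_bernstein hC hS hα _ hx,
    ← bernsteinPolynomial.sum_range_succ_succ_eval_smul n, ← sum_sub_distrib]
  simp only [← sub_smul]
  refine norm_sum_smul_le_of_sum_eq_zero _ ?_ _ x fun k _ => ?_
  · have h1 := bernsteinPolynomial.sum_range_succ_succ_eval_smul n (1 - α) fun _ => (1 : ℝ)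
    simp only [smul_eq_mul, mul_one] at h1
    rw [sum_sub_distrib, h1, bernsteinPolynomial.eval_sum, bernsteinPolynomial.eval_sum, sub_self]
  · rw [← dist_eq_norm]
    exact Metric.dist_le_diam_of_mem hbd (hS.iterate k hx) hx

theorem stmt13_general {E : Type*} [NormedAddCommGroup E] [NormedSpace ℝ E]
    (C : Set E) (hconv : Convex ℝ C)
    (hbd : Bornology.IsBounded C)
    (S : E → E) (hSC : Set.MapsTo S C C)
    (haff : ∀ x ∈ C, ∀ y ∈ C, ∀ lam ∈ Set.Icc (0 : ℝ) 1,
      S (lam • x + (1 - lam) • y) = lam • S x + (1 - lam) • S y)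
    (α : ℝ) (hα : α ∈ Set.Ioo (0 : ℝ) 1) :
    Tendsto (fun n : ℕ => ⨆ x : C,
      ‖(fun x => α • x + (1 - α) • S x)^[n + 1] (x : E) -
        (fun x => α • x + (1 - α) • S x)^[n] (x : E)‖)
      atTop (𝓝 0) := by
  have hbound := fun n (x : C) => AffineOn.norm_iterate_average_succ_sub_le hconv hbd haff hSC
    (Set.Ioo_subset_Icc_self hα) n x.2
  have hlim := (bernsteinPolynomial.tendsto_sum_abs_eval_succ_sub_eval
    (x := 1 - α) ⟨by linarith [hα.2], by linarith [hα.1]⟩).mul_const (Metric.diam C)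
  rw [zero_mul] at hlim
  exact squeeze_zero (fun n => Real.iSup_nonneg fun x => norm_nonneg _)
    (fun n => Real.iSup_le (hbound n) (mul_nonneg (sum_nonneg fun k _ => abs_nonneg _)
      Metric.diam_nonneg)) hlim

/-- Anzai–Ishikawa: the averaged map `T = αI + (1-α)S` of an affine mapping
`S` on a convex bounded subset of a Banach space is uniformly asymptotically
regular. -/
theorem stmt13 {E : Type*} [NormedAddCommGroup E] [NormedSpace ℝ E]
    [CompleteSpace E] (C : Set E) (hconv : Convex ℝ C)
    (hbd : Bornology.IsBounded C)
    (S : E → E) (hSC : Set.MapsTo S C C)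
    (haff : ∀ x ∈ C, ∀ y ∈ C, ∀ lam ∈ Set.Icc (0 : ℝ) 1,
      S (lam • x + (1 - lam) • y) = lam • S x + (1 - lam) • S y)
    (α : ℝ) (hα : α ∈ Set.Ioo (0 : ℝ) 1) :
    Tendsto (fun n : ℕ => ⨆ x : C,
      ‖(fun x => α • x + (1 - α) • S x)^[n + 1] (x : E) -
        (fun x => α • x + (1 - α) • S x)^[n] (x : E)‖)
      atTop (𝓝 0) :=
  stmt13_general C hconv hbd S hSC haff α hα
end

section
/- Let C be a closed convex subset of a Banach space and T : C → C nonexpansive, α ∈ (0,1). Suppose the mapping F = (I − αT)^{−1}((1−α)I) is well-defined on C and there is a nonempty bounded set D ⊆ C with F(D) = D. Then T has a fixed point, and Fix F = Fix T. -/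
open Function Set

/-!
Since `F '' D = D`, every `x ∈ D` starts a bounded backward orbit `x = X 0, X 1, …` of `F`, i.e.
`X n = α • T (X n) + (1 - α) • X (n + 1)`. Nonexpansiveness of `T` turns this into
`‖a n - (1 - α) • a (n + 1)‖ ≤ α * ‖a n‖` for the steps `a n = X (n + 1) - X n`. Pairing with a
norming functional of a step whose norm is almost `L = sup ‖a n‖` shows that the next `m` steps
all point in nearly the same direction with length nearly `L`, so `‖X (n + m) - X n‖` is nearly
`m * L`. Boundedness of the orbit forces `L = 0`, hence `x = X 1 = F x`, i.e. `T x = x`.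
-/

theorem Set.SurjOn.exists_backward_orbit {β : Type*} {f : β → β} {s : Set β}
    (h : SurjOn f s s) {x : β} (hx : x ∈ s) :
    ∃ X : ℕ → β, X 0 = x ∧ (∀ n, X n ∈ s) ∧ ∀ n, f (X (n + 1)) = X n := by
  have : Nonempty β := ⟨x⟩
  refine ⟨fun n => (invFunOn f s)^[n] x, rfl, fun n => h.mapsTo_invFunOn.iterate n hx, fun n => ?_⟩
  change f ((invFunOn f s)^[n + 1] x) = _
  rw [iterate_succ_apply']
  exact h.rightInvOn_invFunOn (h.mapsTo_invFunOn.iterate n hx)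

section BackwardOrbit

variable {E : Type*} [NormedAddCommGroup E] [NormedSpace ℝ E] {α : ℝ}

lemma StrongDual.apply_le_norm {f : StrongDual ℝ E} (hf : ‖f‖ ≤ 1) (z : E) : f z ≤ ‖z‖ :=
  (le_abs_self _).trans (by simpa using f.le_of_opNorm_le hf z)

lemma one_sub_mul_sub_apply_le {f : StrongDual ℝ E} (hf : ‖f‖ ≤ 1) (hα : 0 ≤ α) {b c : E}
    {L : ℝ} (hc : ‖c‖ ≤ L) (h : ‖c - (1 - α) • b‖ ≤ α * ‖c‖) :
    (1 - α) * (L - f b) ≤ L - f c := by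
  have hfc : f (c - (1 - α) • b) ≤ α * L :=
    calc f (c - (1 - α) • b) ≤ ‖c - (1 - α) • b‖ := StrongDual.apply_le_norm hf _
      _ ≤ α * ‖c‖ := h
      _ ≤ α * L := mul_le_mul_of_nonneg_left hc hα
  rw [map_sub, map_smul, smul_eq_mul] at hfc
  linarith

variable {a : ℕ → E} {L : ℝ}

lemma pow_mul_sub_apply_le (hα0 : 0 ≤ α) (hα1 : α ≤ 1) (hL : ∀ n, ‖a n‖ ≤ L)
    (ha : ∀ n, ‖a n - (1 - α) • a (n + 1)‖ ≤ α * ‖a n‖) {f : StrongDual ℝ E} (hf : ‖f‖ ≤ 1)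
    (n k : ℕ) : (1 - α) ^ k * (L - f (a (n + k))) ≤ L - f (a n) := by
  induction k with
  | zero => simp
  | succ k ih =>
    calc (1 - α) ^ (k + 1) * (L - f (a (n + (k + 1))))
        = (1 - α) ^ k * ((1 - α) * (L - f (a (n + k + 1)))) := by ring_nf
      _ ≤ (1 - α) ^ k * (L - f (a (n + k))) :=
          mul_le_mul_of_nonneg_left (one_sub_mul_sub_apply_le hf hα0 (hL _) (ha _))
            (pow_nonneg (by linarith) k)
      _ ≤ L - f (a n) := ih

lemma pow_mul_sub_norm_sum_le (hα0 : 0 ≤ α) (hα1 : α ≤ 1) (hL : ∀ n, ‖a n‖ ≤ L)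
    (ha : ∀ n, ‖a n - (1 - α) • a (n + 1)‖ ≤ α * ‖a n‖) (n m : ℕ) :
    (1 - α) ^ m * (m * L - ‖∑ k ∈ Finset.range m, a (n + k)‖) ≤ m * (L - ‖a n‖) := by
  obtain ⟨f, hf, hfa⟩ := exists_dual_vector'' ℝ (a n)
  replace hfa : f (a n) = ‖a n‖ := by exact_mod_cast hfa
  have hterm : ∀ k ∈ Finset.range m, (1 - α) ^ m * (L - f (a (n + k))) ≤ L - ‖a n‖ := by
    intro k hk
    have hnorm : f (a (n + k)) ≤ L := (StrongDual.apply_le_norm hf _).trans (hL _)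
    have hpow : (1 - α) ^ m ≤ (1 - α) ^ k :=
      pow_le_pow_of_le_one (by linarith) (by linarith) (Finset.mem_range.mp hk).le
    rw [← hfa]
    exact (mul_le_mul_of_nonneg_right hpow (by linarith)).trans
      (pow_mul_sub_apply_le hα0 hα1 hL ha hf n k)
  have hsum := Finset.sum_le_sum hterm
  rw [← Finset.mul_sum, Finset.sum_sub_distrib, ← map_sum, Finset.sum_const, Finset.card_range,
    nsmul_eq_mul, Finset.sum_const, Finset.card_range, nsmul_eq_mul] at hsum
  refine le_trans (mul_le_mul_of_nonneg_left ?_ (pow_nonneg (by linarith) m)) hsum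
  linarith [StrongDual.apply_le_norm hf (∑ k ∈ Finset.range m, a (n + k))]

lemma eq_zero_of_norm_sum_range_le (hα0 : 0 ≤ α) (hα1 : α < 1)
    (ha : ∀ n, ‖a n - (1 - α) • a (n + 1)‖ ≤ α * ‖a n‖) {R : ℝ}
    (hR : ∀ n m, ‖∑ k ∈ Finset.range m, a (n + k)‖ ≤ R) (n : ℕ) : a n = 0 := by
  have hbdd : BddAbove (range fun n => ‖a n‖) := ⟨R, by rintro _ ⟨n, rfl⟩; simpa using hR n 1⟩
  set L := ⨆ n, ‖a n‖
  have hL : ∀ n, ‖a n‖ ≤ L := le_ciSup hbdd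
  have hmul : ∀ m : ℕ, 0 < m → m * L ≤ R := by
    intro m hm
    have hm' : (0 : ℝ) < m := Nat.cast_pos.mpr hm
    set c := (1 - α) ^ m * (m * L - R)
    have hc : ∀ n, ‖a n‖ ≤ L - c / m := by
      intro n
      have h := pow_mul_sub_norm_sum_le hα0 hα1.le hL ha n m
      have h' : c ≤ m * (L - ‖a n‖) :=
        le_trans (mul_le_mul_of_nonneg_left (by linarith [hR n m]) (pow_nonneg (by linarith) m)) h
      rw [le_sub_comm, div_le_iff₀ hm']
      linarith
    have hc0 : c / m ≤ 0 := by linarith [ciSup_le hc]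
    have : m * L - R ≤ 0 := nonpos_of_mul_nonpos_right
      (by simpa using (div_le_iff₀ hm').mp hc0) (pow_pos (by linarith) m)
    linarith
  have hL0 : L ≤ 0 := by
    by_contra! hL0
    obtain ⟨m, hm⟩ := exists_nat_gt (R / L)
    have hm' : R < (m + 1 : ℕ) * L := by push_cast; nlinarith [(div_lt_iff₀ hL0).mp hm]
    linarith [hmul (m + 1) m.succ_pos]
  exact norm_le_zero_iff.mp ((hL n).trans hL0)

lemma succ_eq_of_isBounded_range_s19 {X : ℕ → E} (hα0 : 0 ≤ α) (hα1 : α < 1)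
    (hX : Bornology.IsBounded (range X))
    (h : ∀ n, ‖(X (n + 1) - X n) - (1 - α) • (X (n + 2) - X (n + 1))‖ ≤ α * ‖X (n + 1) - X n‖)
    (n : ℕ) : X (n + 1) = X n := by
  obtain ⟨R, hR⟩ := Metric.isBounded_iff.mp hX
  have hsum : ∀ n m, ‖∑ k ∈ Finset.range m, (X (n + k + 1) - X (n + k))‖ ≤ R := by
    intro n m
    have htel : ∑ k ∈ Finset.range m, (X (n + k + 1) - X (n + k)) = X (n + m) - X n :=
      Finset.sum_range_sub (fun k => X (n + k)) m
    rw [htel, ← dist_eq_norm]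
    exact hR (mem_range_self _) (mem_range_self _)
  exact sub_eq_zero.mp
    (eq_zero_of_norm_sum_range_le (a := fun n => X (n + 1) - X n) hα0 hα1 h hsum n)

lemma norm_sub_sub_smul_le {T : E → E} (hα : 0 ≤ α) {x y z : E}
    (hT : ‖T y - T x‖ ≤ ‖y - x‖) (hx : x = α • T x + (1 - α) • y)
    (hy : y = α • T y + (1 - α) • z) :
    ‖(y - x) - (1 - α) • (z - y)‖ ≤ α * ‖y - x‖ := by
  have hdiff : (y - x) - (1 - α) • (z - y) = α • (T y - T x) := by
    linear_combination (norm := module) hy - hx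
  rw [hdiff, norm_smul, Real.norm_of_nonneg hα]
  exact mul_le_mul_of_nonneg_left hT hα

lemma eq_of_eq_smul_add_one_sub_smul (hα : α ≠ 0) {x y : E}
    (h : x = α • y + (1 - α) • x) : y = x :=
  smul_right_injective E hα (by linear_combination (norm := module) -h)

lemma eq_of_eq_smul_add_one_sub_smul_of_isFixedPt {T : E → E} (hα0 : 0 ≤ α) (hα1 : α < 1)
    {y z : E} (hz : T z = z) (hT : ‖T y - T z‖ ≤ ‖y - z‖) (hy : y = α • T y + (1 - α) • z) :
    y = z := by
  have hdiff : y - z = α • (T y - T z) := by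
    rw [hz]
    linear_combination (norm := module) hy
  have hle : ‖y - z‖ ≤ α * ‖y - z‖ := by
    calc ‖y - z‖ = α * ‖T y - T z‖ := by rw [hdiff, norm_smul, Real.norm_of_nonneg hα0]
      _ ≤ α * ‖y - z‖ := mul_le_mul_of_nonneg_left hT hα0
  have : ‖y - z‖ ≤ 0 := by nlinarith [norm_nonneg (y - z)]
  exact sub_eq_zero.mp (norm_le_zero_iff.mp this)

end BackwardOrbit

theorem stmt19_general {E : Type*} [NormedAddCommGroup E] [NormedSpace ℝ E]
    (C : Set E) (T : E → E)
    (hne : ∀ x ∈ C, ∀ y ∈ C, ‖T x - T y‖ ≤ ‖x - y‖)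
    (α : ℝ) (hα : α ∈ Set.Ioo (0 : ℝ) 1)
    (F : E → E)
    (hF : ∀ x ∈ C, F x ∈ C ∧ F x = α • T (F x) + (1 - α) • x)
    (D : Set E) (hDC : D ⊆ C) (hD : D.Nonempty)
    (hDbd : Bornology.IsBounded D) (hFD : F '' D = D) :
    (∃ x ∈ C, T x = x) ∧ {x ∈ C | F x = x} = {x ∈ C | T x = x} := by
  obtain ⟨hα0, hα1⟩ := hα
  have hDfix : ∀ x ∈ D, T x = x := by
    intro x hx
    obtain ⟨X, rfl, hXD, hXF⟩ := SurjOn.exists_backward_orbit hFD.superset hx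
    have hXC n : X n ∈ C := hDC (hXD n)
    have hrel n : X n = α • T (X n) + (1 - α) • X (n + 1) := hXF n ▸ (hF _ (hXC (n + 1))).2
    have hX1 : X 1 = X 0 := succ_eq_of_isBounded_range_s19 hα0.le hα1
      (hDbd.subset (range_subset_iff.mpr hXD))
      (fun n => norm_sub_sub_smul_le hα0.le (hne _ (hXC _) _ (hXC _)) (hrel n) (hrel (n + 1))) 0
    exact eq_of_eq_smul_add_one_sub_smul hα0.ne' (hX1 ▸ hrel 0)
  refine ⟨?_, ?_⟩
  · obtain ⟨x, hx⟩ := hD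
    exact ⟨x, hDC hx, hDfix x hx⟩
  · ext z
    refine ⟨fun ⟨hz, hFz⟩ => ⟨hz, ?_⟩, fun ⟨hz, hTz⟩ => ⟨hz, ?_⟩⟩
    · have h := (hF z hz).2
      rw [hFz] at h
      exact eq_of_eq_smul_add_one_sub_smul hα0.ne' h
    · exact eq_of_eq_smul_add_one_sub_smul_of_isFixedPt hα0.le hα1 hTz
        (hne _ (hF z hz).1 _ hz) (hF z hz).2

/-- Let `C` be a closed convex subset of a Banach space, `T : C → C`
nonexpansive, `α ∈ (0,1)`, and `F = (I − αT)^{-1}((1−α)I)` the resolvent-type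
map, i.e. `F x` is the unique point `y ∈ C` with `y = α • T y + (1-α) • x`.
If `F(D) = D` for some nonempty bounded `D ⊆ C`, then `T` has a fixed point
and `Fix F = Fix T` on `C`. -/
theorem stmt19 {E : Type*} [NormedAddCommGroup E] [NormedSpace ℝ E]
    [CompleteSpace E] (C : Set E) (hcl : IsClosed C) (hconv : Convex ℝ C)
    (T : E → E) (hTC : Set.MapsTo T C C)
    (hne : ∀ x ∈ C, ∀ y ∈ C, ‖T x - T y‖ ≤ ‖x - y‖)
    (α : ℝ) (hα : α ∈ Set.Ioo (0 : ℝ) 1)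
    (F : E → E)
    (hF : ∀ x ∈ C, F x ∈ C ∧ F x = α • T (F x) + (1 - α) • x)
    (D : Set E) (hDC : D ⊆ C) (hD : D.Nonempty)
    (hDbd : Bornology.IsBounded D) (hFD : F '' D = D) :
    (∃ x ∈ C, T x = x) ∧ {x ∈ C | F x = x} = {x ∈ C | T x = x} :=
  stmt19_general C T hne α hα F hF D hDC hD hDbd hFD
end
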